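/- arXiv:2207.03143 — 4 statements merged into one kernel-verified Lean document; each statement's English description precedes it below -/
import Mathlib

section
/- Let G be a connected graph that is non-colorable (i.e., G admits no locally irregular edge coloring) and let e be an edge of G. If e is incident to a leaf of G, or e belongs to a cycle of G, then the graph G − e is colorable. -/
open SimpleGraph

variable {V : Type*}

noncomputable def colorDeg (G : SimpleGraph V) (c : Sym2 V → ℕ) (i : ℕ) (x : V) : ℕ :=
  {y | G.Adj x y ∧ c s(x, y) = i}.ncard

def IsLocIrrColoring (G : SimpleGraph V) (c : Sym2 V → ℕ) : Prop :=
  ∀ x y, G.Adj x y → colorDeg G c (c s(x, y)) x ≠ colorDeg G c (c s(x, y)) y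

def IsLIEC (G : SimpleGraph V) (k : ℕ) (c : Sym2 V → ℕ) : Prop :=
  (∀ e ∈ G.edgeSet, c e < k) ∧ IsLocIrrColoring G c

def IrrColorable (G : SimpleGraph V) : Prop := ∃ k c, IsLIEC G k c

noncomputable def irrChromIndex (G : SimpleGraph V) : ℕ :=
  sInf {k | ∃ c, IsLIEC G k c}

def IsCactus (G : SimpleGraph V) : Prop :=
  ∀ ⦃a b : V⦄ (p : G.Walk a a) (q : G.Walk b b), p.IsCycle → q.IsCycle →
    (∃ e, e ∈ p.edges ∧ e ∈ q.edges) → ∀ e, e ∈ p.edges ↔ e ∈ q.edges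

noncomputable def numCycles (G : SimpleGraph V) : ℕ :=
  {s : Set (Sym2 V) | ∃ (w : V) (p : G.Walk w w), p.IsCycle ∧ {e | e ∈ p.edges} = s}.ncard

/-!  Auxiliary development.

A coloring is *good* if every color class (restricted to edges) is a "cherry":
a pair of distinct edges sharing a vertex.  Such a coloring is locally irregular.
We show every graph whose edges all lie in one reachability class and whose
number of edges is even admits a good coloring, by repeatedly splitting off a
cherry near a vertex of maximal distance from the root. -/

def GoodColoring (G : SimpleGraph V) (c : Sym2 V → ℕ) : Prop :=
  ∀ e ∈ G.edgeSet, ∃ m a b, a ≠ b ∧ G.Adj m a ∧ G.Adj m b ∧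
    (e = s(m, a) ∨ e = s(m, b)) ∧
    ∀ f ∈ G.edgeSet, (c f = c e ↔ (f = s(m, a) ∨ f = s(m, b)))

lemma cherry_colorDeg (G : SimpleGraph V) (c : Sym2 V → ℕ) {i : ℕ} {m a b : V}
    (hab : a ≠ b) (h1 : G.Adj m a) (h2 : G.Adj m b)
    (hcls : ∀ f ∈ G.edgeSet, (c f = i ↔ (f = s(m, a) ∨ f = s(m, b)))) :
    colorDeg G c i m = 2 ∧ colorDeg G c i a = 1 := by
  constructor
  · have hset : {y | G.Adj m y ∧ c s(m, y) = i} = {a, b} := by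
      ext y
      simp only [Set.mem_setOf_eq, Set.mem_insert_iff, Set.mem_singleton_iff]
      constructor
      · rintro ⟨hy, hc⟩
        rcases (hcls _ (G.mem_edgeSet.mpr hy)).mp hc with h | h
        · exact Or.inl (Sym2.congr_right.mp h)
        · exact Or.inr (Sym2.congr_right.mp h)
      · rintro (rfl | rfl)
        · exact ⟨h1, (hcls _ (G.mem_edgeSet.mpr h1)).mpr (Or.inl rfl)⟩
        · exact ⟨h2, (hcls _ (G.mem_edgeSet.mpr h2)).mpr (Or.inr rfl)⟩
    rw [colorDeg, hset]
    exact Set.ncard_pair hab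
  · have hset : {y | G.Adj a y ∧ c s(a, y) = i} = {m} := by
      ext y
      simp only [Set.mem_setOf_eq, Set.mem_singleton_iff]
      constructor
      · rintro ⟨hy, hc⟩
        rcases (hcls _ (G.mem_edgeSet.mpr hy)).mp hc with h | h
        · rcases Sym2.eq_iff.mp h with ⟨h', _⟩ | ⟨_, h'⟩
          · exact absurd h' h1.ne'
          · exact h'
        · rcases Sym2.eq_iff.mp h with ⟨h', _⟩ | ⟨h', _⟩
          · exact absurd h' h1.ne'
          · exact absurd h' hab
      · rintro rfl
        refine ⟨h1.symm, ?_⟩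
        rw [Sym2.eq_swap]
        exact (hcls _ (G.mem_edgeSet.mpr h1)).mpr (Or.inl rfl)
    rw [colorDeg, hset]
    exact Set.ncard_singleton m

lemma GoodColoring.irrColorable {G : SimpleGraph V} [Fintype V] {c : Sym2 V → ℕ}
    (hc : GoodColoring G c) : IrrColorable G := by
  classical
  refine ⟨(Finset.univ : Finset (Sym2 V)).sup c + 1, c, fun e _ =>
    Nat.lt_succ_of_le (Finset.le_sup (Finset.mem_univ e)), ?_⟩
  intro x y hxy
  obtain ⟨m, a, b, hab, h1, h2, hor, hcls⟩ := hc s(x, y) (G.mem_edgeSet.mpr hxy)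
  have key : ∀ (a b : V), a ≠ b → G.Adj m a → G.Adj m b →
      (∀ f ∈ G.edgeSet, (c f = c s(x, y) ↔ (f = s(m, a) ∨ f = s(m, b)))) →
      s(x, y) = s(m, a) →
      colorDeg G c (c s(x, y)) x ≠ colorDeg G c (c s(x, y)) y := by
    intro a b hab h1 h2 hcls heq
    obtain ⟨hm, ha⟩ := cherry_colorDeg G c hab h1 h2 hcls
    rcases Sym2.eq_iff.mp heq with ⟨rfl, rfl⟩ | ⟨rfl, rfl⟩
    · rw [hm, ha]; omega
    · rw [hm, ha]; omega
  rcases hor with heq | heq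
  · exact key a b hab h1 h2 hcls heq
  · refine key b a hab.symm h2 h1 ?_ heq
    intro f hf
    rw [hcls f hf]
    exact or_comm

lemma good_extend [Fintype V] (G : SimpleGraph V) {m a b : V} (hab : a ≠ b)
    (h1 : G.Adj m a) (h2 : G.Adj m b) (c' : Sym2 V → ℕ)
    (hc' : GoodColoring (G.deleteEdges {s(m, a), s(m, b)}) c') :
    ∃ c, GoodColoring G c := by
  classical
  set G2 := G.deleteEdges {s(m, a), s(m, b)} with hG2
  set N := (Finset.univ : Finset (Sym2 V)).sup c' + 1 with hN
  have hNlt : ∀ f, c' f < N := fun f => Nat.lt_succ_of_le (Finset.le_sup (Finset.mem_univ f))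
  set c : Sym2 V → ℕ := fun f => if f = s(m, a) ∨ f = s(m, b) then N else c' f with hcdef
  refine ⟨c, ?_⟩
  have hcval : ∀ f, (f = s(m, a) ∨ f = s(m, b)) → c f = N := by
    intro f hf; simp [hcdef, hf]
  have hcval' : ∀ f, ¬(f = s(m, a) ∨ f = s(m, b)) → c f = c' f := by
    intro f hf; simp only [hcdef, if_neg hf]
  have hmemG2 : ∀ f, f ∈ G.edgeSet → ¬(f = s(m, a) ∨ f = s(m, b)) → f ∈ G2.edgeSet := by
    intro f hf hnf
    rw [hG2, edgeSet_deleteEdges]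
    refine ⟨hf, ?_⟩
    simpa using hnf
  intro e heG
  by_cases hecase : e = s(m, a) ∨ e = s(m, b)
  · refine ⟨m, a, b, hab, h1, h2, hecase, ?_⟩
    intro f hf
    rw [hcval e hecase]
    by_cases hfc : f = s(m, a) ∨ f = s(m, b)
    · simp [hcval f hfc, hfc]
    · rw [hcval' f hfc]
      simp only [hfc, iff_false]
      exact Nat.ne_of_lt (hNlt f)
  · obtain ⟨m', a', b', hab', h1', h2', hor', hcls'⟩ := hc' e (hmemG2 e heG hecase)
    have h1G : G.Adj m' a' := h1'.1
    have h2G : G.Adj m' b' := h2'.1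
    refine ⟨m', a', b', hab', h1G, h2G, hor', ?_⟩
    have hce : c e = c' e := hcval' e hecase
    intro f hf
    by_cases hfc : f = s(m, a) ∨ f = s(m, b)
    · rw [hcval f hfc, hce]
      have hfne1 : f ≠ s(m', a') := by
        intro hrfl
        have h := G2.mem_edgeSet.mpr h1'
        rw [hG2, edgeSet_deleteEdges] at h
        exact h.2 (by rw [Set.mem_insert_iff, Set.mem_singleton_iff, ← hrfl]; exact hfc)
      have hfne2 : f ≠ s(m', b') := by
        intro hrfl
        have h := G2.mem_edgeSet.mpr h2'
        rw [hG2, edgeSet_deleteEdges] at h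
        exact h.2 (by rw [Set.mem_insert_iff, Set.mem_singleton_iff, ← hrfl]; exact hfc)
      simp only [hfne1, hfne2, or_self, iff_false]
      exact Nat.ne_of_gt (hNlt e)
    · rw [hcval' f hfc, hce]
      exact hcls' f (hmemG2 f hf hfc)

lemma delete_two_step [Fintype V] {n : ℕ} (G : SimpleGraph V) (r : V)
    (hcard : G.edgeSet.ncard = n) (hn : Even n)
    {m a b : V} (hab : a ≠ b) (h1 : G.Adj m a) (h2 : G.Adj m b)
    (hreach2 : ∀ ⦃x y : V⦄, (G.deleteEdges {s(m, a), s(m, b)}).Adj x y →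
      (G.deleteEdges {s(m, a), s(m, b)}).Reachable r x)
    (IH : ∀ k, k < n → ∀ (H : SimpleGraph V), H.edgeSet.ncard = k → Even k →
      (∀ ⦃x y : V⦄, H.Adj x y → H.Reachable r x) → ∃ c, GoodColoring H c) :
    ∃ c, GoodColoring G c := by
  classical
  have hne : s(m, a) ≠ s(m, b) := fun h => hab (Sym2.congr_right.mp h)
  have hsub : {s(m, a), s(m, b)} ⊆ G.edgeSet := by
    intro f hf
    rcases hf with rfl | rfl
    · exact G.mem_edgeSet.mpr h1
    · exact G.mem_edgeSet.mpr h2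
  have hcard2 : (G.deleteEdges {s(m, a), s(m, b)}).edgeSet.ncard = n - 2 := by
    rw [edgeSet_deleteEdges, Set.ncard_diff hsub, Set.ncard_pair hne, hcard]
  have h2n : 2 ≤ n := by
    have := Set.ncard_le_ncard hsub (Set.toFinite _)
    rwa [Set.ncard_pair hne, hcard] at this
  obtain ⟨c', hc'⟩ := IH (n - 2) (by omega) _ hcard2 (by rcases hn with ⟨t, rfl⟩; exact ⟨t-1, by omega⟩) hreach2
  exact good_extend G hab h1 h2 c' hc'

lemma pendant_walk {G : SimpleGraph V} {u v : V}
    (hu : ∀ z, G.Adj u z → z = v) (hv : ∀ z, G.Adj v z → z = u) :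
    ∀ {x y : V} (_ : G.Walk y x), (y = u ∨ y = v) → (x = u ∨ x = v) := by
  intro x y w
  induction w with
  | nil => exact fun h => h
  | cons h p ih =>
      intro hy
      apply ih
      rcases hy with rfl | rfl
      · exact Or.inr (hu _ h)
      · exact Or.inl (hv _ h)

lemma leaf_reach {G : SimpleGraph V} {v : V} :
    ∀ {x u : V} (_ : G.Walk x u), (∀ z, G.Adj v z → z = u) → x ≠ v →
      (G.deleteEdges {s(v, u)}).Reachable x u := by
  intro x u w
  induction w with
  | nil => exact fun _ _ => Reachable.refl _
  | @cons x z u h p ih =>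
      intro hv hx
      by_cases hz : z = v
      · subst hz
        have hxu : x = u := hv x h.symm
        subst hxu
        exact Reachable.refl _
      · refine (Adj.reachable ?_).trans (ih hv hz)
        refine (deleteEdges_adj).mpr ⟨h, ?_⟩
        simp only [Set.mem_singleton_iff]
        intro heq
        rcases Sym2.eq_iff.mp heq with ⟨h1, _⟩ | ⟨h1, h2⟩
        · exact hx h1
        · exact hz h2

lemma cycle_reach {G : SimpleGraph V} {b : V} :
    ∀ {x a : V} (_ : G.Walk x a), (G.deleteEdges {s(a, b)}).Reachable a b →
      (G.deleteEdges {s(a, b)}).Reachable x a := by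
  intro x a w
  induction w with
  | nil => exact fun _ => Reachable.refl _
  | @cons x z a h p ih =>
      intro hab
      by_cases he : s(x, z) = s(a, b)
      · rcases Sym2.eq_iff.mp he with ⟨rfl, rfl⟩ | ⟨rfl, rfl⟩
        · exact Reachable.refl _
        · exact hab.symm
      · refine (Adj.reachable ((deleteEdges_adj).mpr ⟨h, ?_⟩)).trans (ih hab)
        simpa using he

lemma pairing_aux [Fintype V] (n : ℕ) : ∀ (G : SimpleGraph V) (r : V),
    G.edgeSet.ncard = n → Even n →
    (∀ ⦃x y : V⦄, G.Adj x y → G.Reachable r x) →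
    ∃ c, GoodColoring G c := by
  induction n using Nat.strong_induction_on with
  | _ n IH =>
  intro G r hcard hev hreach
  classical
  rcases Nat.eq_zero_or_pos n with rfl | hpos
  · -- no edges
    have hempty : G.edgeSet = ∅ := by
      rw [← Set.ncard_eq_zero (Set.toFinite _)]; exact hcard
    exact ⟨fun _ => 0, fun e he => by rw [hempty] at he; exact absurd he (Set.notMem_empty e)⟩
  · have h1n : 1 < n := by
      rcases hev with ⟨t, rfl⟩; omega
    obtain ⟨e0, he0⟩ : G.edgeSet.Nonempty := (Set.ncard_pos (Set.toFinite _)).mp (hcard ▸ hpos)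
    by_cases hstar : ∀ f ∈ G.edgeSet, r ∈ f
    · -- star case : all edges through r
      obtain ⟨a0, rfl⟩ := Sym2.mem_iff_exists.mp (hstar e0 he0)
      obtain ⟨f1, hf1, hf1ne⟩ := Set.exists_ne_of_one_lt_ncard (hcard ▸ h1n) s(r, a0)
      obtain ⟨a1, rfl⟩ := Sym2.mem_iff_exists.mp (hstar f1 hf1)
      have ha01 : a0 ≠ a1 := by
        intro h; exact hf1ne (by rw [h])
      refine delete_two_step G r hcard hev ha01
        (G.mem_edgeSet.mp he0) (G.mem_edgeSet.mp hf1) ?_ (fun k hk H => IH k hk H r)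
      intro x y hxy
      have hmem : s(x, y) ∈ G.edgeSet := G.mem_edgeSet.mpr hxy.1
      rcases Sym2.mem_iff.mp (hstar _ hmem) with rfl | rfl
      · exact Reachable.refl _
      · exact (hxy.symm).reachable
    · -- non-star case
      set R : Finset V := Finset.univ.filter (fun x => G.Reachable r x) with hR
      obtain ⟨v, hvR, hvmax⟩ := R.exists_max_image (G.dist r)
        ⟨r, by simp only [hR, Finset.mem_filter, Finset.mem_univ, true_and]; exact Reachable.refl r⟩
      set d := G.dist r v with hd
      have hmaxd : ∀ x, G.Reachable r x → G.dist r x ≤ d :=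
        fun x hx => hvmax x (by simp only [hR, Finset.mem_filter, Finset.mem_univ, true_and]; exact hx)
      -- every graph-distance-d vertex z is avoided by optimal walks to x ≠ z
      have keyavoid : ∀ (x z : V) (p : G.Walk r x), p.length = G.dist r x →
          G.dist r z = d → z ≠ x → z ∉ p.support := by
        intro x z p hp hz hzx hmem
        obtain ⟨q, s, rfl⟩ := Walk.mem_support_iff_exists_append.mp hmem
        have hq : G.dist r z ≤ q.length := dist_le q
        have hs : G.dist z x ≤ s.length := dist_le s
        have hlen : q.length + s.length = G.dist r x := by
          rw [← Walk.length_append]; exact hp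
        have hdx : G.dist r x ≤ d := hmaxd x ⟨q.append s⟩
        have hposzx : 0 < G.dist z x := Reachable.pos_dist_of_ne ⟨s⟩ hzx
        omega
      by_cases hA : ∃ v' aa bb, G.dist r v' = d ∧ aa ≠ bb ∧ G.Adj v' aa ∧ G.Adj v' bb
      · -- Case A : some vertex at maximal distance has two distinct neighbors
        obtain ⟨v', aa, bb, hv'd, habv, h1v, h2v⟩ := hA
        have main : ∀ x, G.Reachable r x → x ≠ v' →
            (G.deleteEdges {s(v', aa), s(v', bb)}).Reachable r x := by
          intro x hx hxv
          obtain ⟨p, hp⟩ := hx.exists_walk_length_eq_dist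
          have hvp : v' ∉ p.support := keyavoid x v' p hp hv'd (Ne.symm hxv)
          refine ⟨p.toDeleteEdges _ ?_⟩
          intro f hf hfs
          simp only [Set.mem_insert_iff, Set.mem_singleton_iff] at hfs
          rcases hfs with rfl | rfl
          · exact hvp (p.fst_mem_support_of_mem_edges hf)
          · exact hvp (p.fst_mem_support_of_mem_edges hf)
        refine delete_two_step G r hcard hev habv h1v h2v ?_ (fun k hk H => IH k hk H r)
        intro x y hxy
        have hxyG := deleteEdges_adj.mp hxy
        by_cases hxv : x = v'
        · have hy := main y (hreach hxyG.1.symm) (by rw [← hxv]; exact hxy.ne')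
          exact hy.trans hxy.symm.reachable
        · exact main x (hreach hxyG.1) hxv
      · -- Case B : every vertex at maximal distance is a pendant vertex
        have huniq : ∀ x, G.dist r x = d → ∀ a b, G.Adj x a → G.Adj x b → a = b := by
          intro x hx a b ha hb
          by_contra hne
          exact hA ⟨x, a, b, hx, hne, ha, hb⟩
        have hd2 : 2 ≤ d := by
          by_contra hlt
          push_neg at hlt
          refine hstar ?_
          intro f hf
          obtain ⟨x1, y1, rfl⟩ : ∃ x y, f = s(x, y) := by
            induction f using Sym2.ind with | _ x y => exact ⟨x, y, rfl⟩
          have hadj : G.Adj x1 y1 := G.mem_edgeSet.mp hf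
          by_contra hrf
          rw [Sym2.mem_iff] at hrf
          push_neg at hrf
          have hrx1 : G.Reachable r x1 := hreach hadj
          have hry1 : G.Reachable r y1 := hreach hadj.symm
          have hpx1 : 0 < G.dist r x1 := hrx1.pos_dist_of_ne hrf.1
          have hpy1 : 0 < G.dist r y1 := hry1.pos_dist_of_ne hrf.2
          have hlx1 : G.dist r x1 ≤ d := hmaxd _ hrx1
          have hly1 : G.dist r y1 ≤ d := hmaxd _ hry1
          have hdx1 : G.dist r x1 = d := by omega
          have hdy1 : G.dist r y1 = d := by omega
          have hux1 : ∀ z, G.Adj x1 z → z = y1 := fun z hz => huniq x1 hdx1 z y1 hz hadj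
          have huy1 : ∀ z, G.Adj y1 z → z = x1 := fun z hz => huniq y1 hdy1 z x1 hz hadj.symm
          obtain ⟨wk⟩ := hrx1.symm
          rcases pendant_walk hux1 huy1 wk (Or.inl rfl) with h | h
          · exact hrf.1 h
          · exact hrf.2 h
        have hvr : v ≠ r := by
          intro h
          rw [hd, h, SimpleGraph.dist_self] at hd2
          omega
        have hrv : G.Reachable r v := Reachable.of_dist_ne_zero (by omega)
        have hnbr : ∃ u, G.Adj v u := by
          obtain ⟨wk⟩ := hrv.symm
          cases wk with
          | nil => exact absurd rfl hvr
          | cons hadj p => exact ⟨_, hadj⟩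
        obtain ⟨u, huv⟩ := hnbr
        have hv1 : ∀ z, G.Adj v z → z = u := fun z hz => huniq v hd.symm z u hz huv
        have hru : G.Reachable r u := hreach huv.symm
        have htri : G.dist r v ≤ G.dist r u + 1 := by
          obtain ⟨qu, hqu⟩ := hru.exists_walk_length_eq_dist
          have := dist_le (qu.concat huv.symm)
          rwa [Walk.length_concat, hqu] at this
        have hdud : d - 1 ≤ G.dist r u := by omega
        have hur : u ≠ r := by
          intro h
          rw [h, SimpleGraph.dist_self] at htri
          omega
        have hvd : G.dist r v = d := hd.symm
        have hw : ∃ w, G.Adj u w ∧ w ≠ v := by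
          by_contra hno
          push_neg at hno
          obtain ⟨wk⟩ := hrv.symm
          rcases pendant_walk hno hv1 wk (Or.inr rfl) with h | h
          · exact hur h.symm
          · exact hvr h.symm
        obtain ⟨w, huw, hwv⟩ := hw
        by_cases hB1 : ∃ w', G.Adj u w' ∧ w' ≠ v ∧ G.dist r w' = d
        · -- B1 : u has a second pendant neighbor at maximal distance
          obtain ⟨w', huw', hw'v, hw'd⟩ := hB1
          have hw'1 : ∀ z, G.Adj w' z → z = u := fun z hz => huniq w' hw'd z u hz huw'.symm
          refine delete_two_step G r hcard hev (Ne.symm hw'v) huv.symm huw' ?_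
            (fun k hk H => IH k hk H r)
          intro x y hxy
          have hxyG := deleteEdges_adj.mp hxy
          by_cases hxv : x = v
          · exfalso
            subst hxv
            have hyu : y = u := hv1 y hxyG.1
            subst hyu
            exact hxyG.2 (by rw [Sym2.eq_swap]; exact Set.mem_insert _ _)
          by_cases hxw : x = w'
          · exfalso
            subst hxw
            have hyu : y = u := hw'1 y hxyG.1
            subst hyu
            exact hxyG.2 (Set.mem_insert_iff.mpr (Or.inr (Set.mem_singleton_iff.mpr Sym2.eq_swap)))
          · obtain ⟨p, hp⟩ := (hreach hxyG.1).exists_walk_length_eq_dist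
            have h1 : v ∉ p.support := keyavoid x v p hp hvd (Ne.symm hxv)
            have h2 : w' ∉ p.support := keyavoid x w' p hp hw'd (Ne.symm hxw)
            refine ⟨p.toDeleteEdges _ ?_⟩
            intro f hf hfs
            simp only [Set.mem_insert_iff, Set.mem_singleton_iff] at hfs
            rcases hfs with rfl | rfl
            · exact h1 (p.snd_mem_support_of_mem_edges hf)
            · exact h2 (p.snd_mem_support_of_mem_edges hf)
        · -- B2 : v is the only neighbor of u at maximal distance
          push_neg at hB1
          have main : ∀ x, G.Reachable r x → x ≠ v → x ≠ u →
              (G.deleteEdges {s(u, v), s(u, w)}).Reachable r x := by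
            intro x hx hxv hxu
            obtain ⟨p, hp⟩ := hx.exists_walk_length_eq_dist
            have hvsup : v ∉ p.support := keyavoid x v p hp hvd (Ne.symm hxv)
            have husup : u ∉ p.support := by
              intro hmem
              obtain ⟨q, s, hps⟩ := Walk.mem_support_iff_exists_append.mp hmem
              have hql : G.dist r u ≤ q.length := dist_le q
              have hsl : G.dist u x ≤ s.length := dist_le s
              have hlen : q.length + s.length = G.dist r x := by
                rw [← Walk.length_append, ← hps]; exact hp
              have hrux : G.Reachable u x := ⟨s⟩
              have htri2 : G.dist r x ≤ G.dist r u + G.dist u x := by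
                obtain ⟨q1, hq1⟩ := hru.exists_walk_length_eq_dist
                obtain ⟨q2, hq2⟩ := hrux.exists_walk_length_eq_dist
                have := dist_le (q1.append q2)
                rwa [Walk.length_append, hq1, hq2] at this
              have hqe : q.length = G.dist r u := by omega
              have hse : s.length = G.dist u x := by omega
              have hslen1 : 1 ≤ s.length := by
                rcases Nat.eq_zero_or_pos s.length with h0 | h1
                · exact absurd (Walk.eq_of_length_eq_zero h0) (Ne.symm hxu)
                · exact h1
              cases s with
              | nil => simp at hslen1
              | @cons _ z _ hadj s' =>
                have hs'l : s'.length + 1 = G.dist u x := by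
                  rw [← hse]; simp [Walk.length_cons]
                have hrz : G.Reachable r z := ⟨q.concat hadj⟩
                have hrzx : G.Reachable z x := ⟨s'⟩
                have htriz : G.dist r x ≤ G.dist r z + G.dist z x := by
                  obtain ⟨q1, hq1⟩ := hrz.exists_walk_length_eq_dist
                  obtain ⟨q2, hq2⟩ := hrzx.exists_walk_length_eq_dist
                  have := dist_le (q1.append q2)
                  rwa [Walk.length_append, hq1, hq2] at this
                have hz2 : G.dist z x ≤ s'.length := dist_le s'
                have hzle : G.dist r z ≤ d := hmaxd z hrz
                have hzd : G.dist r z = d := by omega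
                have hzv : z = v := by
                  by_contra hzv
                  exact hB1 z hadj hzv hzd
                apply hvsup
                rw [hps, Walk.mem_support_append_iff]
                right
                rw [Walk.support_cons]
                exact List.mem_cons_of_mem _ (hzv ▸ s'.start_mem_support)
            refine ⟨p.toDeleteEdges _ ?_⟩
            intro f hf hfs
            simp only [Set.mem_insert_iff, Set.mem_singleton_iff] at hfs
            rcases hfs with rfl | rfl
            · exact husup (p.fst_mem_support_of_mem_edges hf)
            · exact husup (p.fst_mem_support_of_mem_edges hf)
          refine delete_two_step G r hcard hev (Ne.symm hwv) huv.symm huw ?_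
            (fun k hk H => IH k hk H r)
          intro x y hxy
          have hxyG := deleteEdges_adj.mp hxy
          by_cases hxv : x = v
          · exfalso
            subst hxv
            have hyu : y = u := hv1 y hxyG.1
            subst hyu
            exact hxyG.2 (by rw [Sym2.eq_swap]; exact Set.mem_insert _ _)
          by_cases hxu : x = u
          · subst hxu
            have hyv : y ≠ v := by
              intro h
              subst h
              exact hxyG.2 (Set.mem_insert _ _)
            have hy := main y (hreach hxyG.1.symm) hyv hxyG.1.ne'
            exact hy.trans hxy.symm.reachable
          · exact main x (hreach hxyG.1) hxv hxu

theorem noncolorable_minus_leaf_or_cycle_edge_colorable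
    [Fintype V] (G : SimpleGraph V) [DecidableRel G.Adj]
    (hconn : G.Connected) (hnc : ¬ IrrColorable G)
    (e : Sym2 V) (he : e ∈ G.edgeSet)
    (h : (∃ v ∈ e, G.degree v = 1) ∨
      ∃ (w : V) (p : G.Walk w w), p.IsCycle ∧ e ∈ p.edges) :
    IrrColorable (G.deleteEdges {e}) := by
  classical
  set n := G.edgeSet.ncard with hn
  have hoddn : ¬ Even n := by
    intro hev
    obtain ⟨r⟩ := hconn.nonempty
    obtain ⟨c, hc⟩ := pairing_aux n G r hn.symm hev (fun x y _ => hconn.preconnected r x)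
    exact hnc hc.irrColorable
  have hpos : 0 < n := (Set.ncard_pos (Set.toFinite _)).mpr ⟨e, he⟩
  have hcard' : (G.deleteEdges {e}).edgeSet.ncard = n - 1 := by
    rw [edgeSet_deleteEdges, Set.ncard_diff (Set.singleton_subset_iff.mpr he),
      Set.ncard_singleton]
  have hev' : Even (n - 1) := by
    rcases Nat.even_or_odd n with hev | ⟨k, hk⟩
    · exact absurd hev hoddn
    · exact ⟨k, by omega⟩
  rcases h with ⟨v, hve, hdeg⟩ | ⟨w, p, hcyc, hep⟩
  · obtain ⟨u, rfl⟩ := Sym2.mem_iff_exists.mp hve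
    have hadj : G.Adj v u := G.mem_edgeSet.mp he
    have hv1 : ∀ z, G.Adj v z → z = u := by
      intro z hz
      have h1 : z ∈ G.neighborFinset v := by rwa [mem_neighborFinset]
      have h2 : u ∈ G.neighborFinset v := by rwa [mem_neighborFinset]
      obtain ⟨a, ha⟩ := Finset.card_eq_one.mp (hdeg : (G.neighborFinset v).card = 1)
      rw [ha, Finset.mem_singleton] at h1 h2
      rw [h1, h2]
    have hreach' : ∀ ⦃x y : V⦄, (G.deleteEdges {s(v, u)}).Adj x y →
        (G.deleteEdges {s(v, u)}).Reachable u x := by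
      intro x y hxy
      have hxv : x ≠ v := by
        intro hx
        have h1 := (deleteEdges_adj.mp hxy).1
        have h2 := (deleteEdges_adj.mp hxy).2
        rw [hx] at h1 h2
        have := hv1 y h1
        rw [this] at h2
        exact h2 (Set.mem_singleton _)
      obtain ⟨wk⟩ := hconn.preconnected x u
      exact (leaf_reach wk hv1 hxv).symm
    obtain ⟨c, hc⟩ := pairing_aux (n - 1) (G.deleteEdges {s(v, u)}) u hcard' hev' hreach'
    exact hc.irrColorable
  · obtain ⟨a, b, rfl⟩ : ∃ a b, e = s(a, b) := by
      induction e using Sym2.ind with | _ a b => exact ⟨a, b, rfl⟩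
    have hcycle := SimpleGraph.adj_and_reachable_delete_edges_iff_exists_cycle.mpr ⟨w, p, hcyc, hep⟩
    have hab : (G.deleteEdges {s(a, b)}).Reachable a b := hcycle.2
    have hreach' : ∀ ⦃x y : V⦄, (G.deleteEdges {s(a, b)}).Adj x y →
        (G.deleteEdges {s(a, b)}).Reachable a x := by
      intro x y hxy
      obtain ⟨wk⟩ := hconn.preconnected x a
      exact (cycle_reach wk hab).symm
    obtain ⟨c, hc⟩ := pairing_aux (n - 1) (G.deleteEdges {s(a, b)}) a hcard' hev' hreach'
    exact hc.irrColorable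
end

section
/- Every shrub admits an almost locally irregular 2-edge coloring (2-aliec). -/
open SimpleGraph

variable {V : Type*}

lemma aliec_core {α : Type*} [DecidableEq α] :
    ∀ (n : ℕ) (K : Finset α), K.card = n → ∀ (a b : ℕ), a ≠ b → ∀ (D : α → ℕ),
    ∃ S ⊆ K, (∀ w ∈ S, D w ≠ S.card + a) ∧
      (∀ w ∈ K, w ∉ S → D w ≠ (K.card - S.card) + b) := by
  intro n
  induction n using Nat.strong_induction_on with
  | _ n ih =>
    intro K hK a b hab D
    by_cases h0 : ∀ w ∈ K, D w ≠ K.card + a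
    · exact ⟨K, le_refl _, h0, fun w hw hw' => absurd hw hw'⟩
    by_cases h1 : ∀ w ∈ K, D w ≠ K.card + b
    · refine ⟨∅, Finset.empty_subset _, by simp, ?_⟩
      intro w hw _
      simpa using h1 w hw
    push_neg at h0 h1
    obtain ⟨w0, hw0K, hw0⟩ := h0
    obtain ⟨w1, hw1K, hw1⟩ := h1
    have hne : w0 ≠ w1 := by
      rintro rfl; rw [hw0] at hw1; omega
    set K' : Finset α := (K.erase w0).erase w1 with hK'
    have hw1e : w1 ∈ K.erase w0 := Finset.mem_erase.2 ⟨hne.symm, hw1K⟩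
    have hK'card : K'.card + 2 = K.card := by
      rw [hK', Finset.card_erase_of_mem hw1e, Finset.card_erase_of_mem hw0K]
      have h2 : 2 ≤ K.card := Finset.one_lt_card.2 ⟨w0, hw0K, w1, hw1K, hne⟩
      omega
    obtain ⟨S', hS'K', hin', hout'⟩ := ih K'.card (by omega) K' rfl (a+1) (b+1)
      (by omega) D
    have hS'c : S'.card ≤ K'.card := Finset.card_le_card hS'K'
    have hw0S' : w0 ∉ S' := fun h =>
      Finset.notMem_erase w0 (K.erase w1) (by
        have := hS'K' h
        rw [hK'] at this
        rw [Finset.erase_right_comm] at this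
        exact this)
    have hK'K : K' ⊆ K := fun x hx =>
      Finset.mem_of_mem_erase (Finset.mem_of_mem_erase hx)
    refine ⟨insert w0 S', ?_, ?_, ?_⟩
    · intro x hx
      rcases Finset.mem_insert.1 hx with rfl | hx
      · exact hw0K
      · exact hK'K (hS'K' hx)
    · intro w hw
      rw [Finset.card_insert_of_notMem hw0S']
      rcases Finset.mem_insert.1 hw with rfl | hw
      · rw [hw0]; omega
      · have := hin' w hw; omega
    · intro w hwK hwS
      rw [Finset.card_insert_of_notMem hw0S']
      have hww0 : w ≠ w0 := fun h => hwS (h ▸ Finset.mem_insert_self _ _)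
      by_cases hww1 : w = w1
      · subst hww1; rw [hw1]; omega
      · have hwK' : w ∈ K' := Finset.mem_erase.2 ⟨hww1, Finset.mem_erase.2 ⟨hww0, hwK⟩⟩
        have := hout' w hwK' (fun h => hwS (Finset.mem_insert_of_mem h))
        omega


section AliecDev

variable {V : Type*} [DecidableEq V]

section Parent

variable (T : SimpleGraph V) (r : V)

/-- distance to the root -/
noncomputable def dd (v : V) : ℕ := T.dist v r

lemma exists_shortest (hc : T.Connected) (v : V) :
    ∃ Q : T.Walk v r, Q.IsPath ∧ Q.length = dd T r v := by
  obtain ⟨Q, hQ⟩ := hc.exists_walk_length_eq_dist v r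
  refine ⟨Q.bypass, Q.bypass_isPath, le_antisymm ?_ (SimpleGraph.dist_le _)⟩
  calc Q.bypass.length ≤ Q.length := Q.length_bypass_le
    _ = dd T r v := hQ

lemma dd_root : dd T r r = 0 := SimpleGraph.dist_self

lemma dd_pos (hc : T.Connected) {v : V} (hv : v ≠ r) : 0 < dd T r v :=
  hc.pos_dist_of_ne hv

lemma exists_parent (hc : T.Connected) {v : V} (hv : v ≠ r) :
    ∃ z, T.Adj v z ∧ dd T r z + 1 = dd T r v := by
  obtain ⟨Q, hQp, hQl⟩ := exists_shortest T r hc v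
  obtain ⟨z, hadj, q, rfl⟩ := Q.exists_eq_cons_of_ne hv
  rw [SimpleGraph.Walk.length_cons] at hQl
  refine ⟨z, hadj, ?_⟩
  have h1 : dd T r z ≤ q.length := SimpleGraph.dist_le q
  obtain ⟨Qz, _, hQzl⟩ := exists_shortest T r hc z
  have h2 : dd T r v ≤ (SimpleGraph.Walk.cons hadj Qz).length := SimpleGraph.dist_le _
  rw [SimpleGraph.Walk.length_cons, hQzl] at h2
  omega

/-- the parent function -/
noncomputable def par (hc : T.Connected) (v : V) : V :=
  if hv : v = r then r else (exists_parent T r hc hv).choose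

lemma par_root (hc : T.Connected) : par T r hc r = r := dif_pos rfl

lemma par_adj (hc : T.Connected) {v : V} (hv : v ≠ r) : T.Adj v (par T r hc v) := by
  rw [par, dif_neg hv]; exact (exists_parent T r hc hv).choose_spec.1

lemma dd_par (hc : T.Connected) {v : V} (hv : v ≠ r) :
    dd T r (par T r hc v) + 1 = dd T r v := by
  rw [par, dif_neg hv]; exact (exists_parent T r hc hv).choose_spec.2

lemma dd_eq_zero (hc : T.Connected) {v : V} (h : dd T r v = 0) : v = r := by
  by_contra hv
  exact absurd h (dd_pos T r hc hv).ne'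

/-- a vertex is not in the support of a shorter shortest path -/
lemma not_mem_support_of_dist_gt {x v : V} (Q : T.Walk x r)
    (hlen : Q.length < dd T r v) : v ∉ Q.support := by
  intro hmem
  have hspec := Q.take_spec hmem
  have hlensum : (Q.takeUntil v hmem).length + (Q.dropUntil v hmem).length = Q.length := by
    rw [← SimpleGraph.Walk.length_append, hspec]
  have h2 : dd T r v ≤ (Q.dropUntil v hmem).length := SimpleGraph.dist_le _
  omega

end Parent

section Unique

variable (T : SimpleGraph V) (r : V)

set_option linter.unusedSectionVars false

lemma parent_unique (hT : T.IsTree) {x y : V} (hadj : T.Adj y x)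
    (hd : dd T r x + 1 = dd T r y) : x = par T r hT.isConnected y := by
  have hc := hT.isConnected
  have hyr : y ≠ r := by
    intro h; subst h
    rw [dd_root] at hd; omega
  set z := par T r hc y with hz
  have hzadj : T.Adj y z := par_adj T r hc hyr
  have hzd : dd T r z + 1 = dd T r y := dd_par T r hc hyr
  by_contra hxz
  obtain ⟨Qx, hQxp, hQxl⟩ := exists_shortest T r hc x
  obtain ⟨Qz, hQzp, hQzl⟩ := exists_shortest T r hc z
  have hyQx : y ∉ Qx.support := by
    apply not_mem_support_of_dist_gt
    omega
  have hyQz : y ∉ Qz.support := by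
    apply not_mem_support_of_dist_gt
    omega
  have hP1 : (SimpleGraph.Walk.cons hadj Qx).IsPath := hQxp.cons hyQx
  have hP2 : (SimpleGraph.Walk.cons hzadj Qz).IsPath := hQzp.cons hyQz
  have heq : SimpleGraph.Walk.cons hadj Qx = SimpleGraph.Walk.cons hzadj Qz := by
    have := hT.IsAcyclic.path_unique ⟨_, hP1⟩ ⟨_, hP2⟩
    exact congrArg Subtype.val this
  -- x is in the support of P1, hence of P2, hence x = z : contradiction
  have hxP2 : x ∈ (SimpleGraph.Walk.cons hzadj Qz).support := by
    rw [← heq]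
    simp [SimpleGraph.Walk.support_cons]
  rw [SimpleGraph.Walk.support_cons] at hxP2
  rcases List.mem_cons.1 hxP2 with h | h
  · exact hadj.ne' h
  · -- x ∈ Qz.support, Qz : z → r with length dd z = dd x - 1 < dd x... 
    -- use takeUntil: walk z → x of length i, dropUntil x → r: dd x ≤ len - i
    have hspec := Qz.take_spec h
    have hlensum : (Qz.takeUntil x h).length + (Qz.dropUntil x h).length = Qz.length := by
      rw [← SimpleGraph.Walk.length_append, hspec]
    have h2 : dd T r x ≤ (Qz.dropUntil x h).length := SimpleGraph.dist_le _
    have h3 : (Qz.takeUntil x h).length = 0 := by omega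
    exact hxz (SimpleGraph.Walk.eq_of_length_eq_zero h3).symm

lemma adj_dd (hT : T.IsTree) {x y : V} (hadj : T.Adj x y) :
    dd T r x + 1 = dd T r y ∨ dd T r y + 1 = dd T r x := by
  have hc := hT.isConnected
  -- first, dd differ by at most one
  obtain ⟨Qx, hQxp, hQxl⟩ := exists_shortest T r hc x
  obtain ⟨Qy, hQyp, hQyl⟩ := exists_shortest T r hc y
  have hb1 : dd T r y ≤ dd T r x + 1 := by
    have := SimpleGraph.dist_le (SimpleGraph.Walk.cons hadj.symm Qx)
    rw [SimpleGraph.Walk.length_cons, hQxl] at this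
    exact this
  have hb2 : dd T r x ≤ dd T r y + 1 := by
    have := SimpleGraph.dist_le (SimpleGraph.Walk.cons hadj Qy)
    rw [SimpleGraph.Walk.length_cons, hQyl] at this
    exact this
  have hne : dd T r x ≠ dd T r y := by
    intro hdd
    have hxy : x ≠ y := hadj.ne
    have hxr : dd T r x ≠ 0 ∨ True := Or.inr trivial
    -- if both distances are 0 then x = y = r
    have hd0 : dd T r x ≠ 0 := by
      intro h0
      have hx := dd_eq_zero T r hc h0
      have hy := dd_eq_zero T r hc (hdd ▸ h0)
      exact hxy (hx.trans hy.symm)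
    -- y ∉ Qx.support
    have hyQx : y ∉ Qx.support := by
      intro hmem
      have hspec := Qx.take_spec hmem
      have hlensum : (Qx.takeUntil y hmem).length + (Qx.dropUntil y hmem).length
          = Qx.length := by
        rw [← SimpleGraph.Walk.length_append, hspec]
      have h2 : dd T r y ≤ (Qx.dropUntil y hmem).length := SimpleGraph.dist_le _
      have h3 : (Qx.takeUntil y hmem).length = 0 := by omega
      exact hxy (SimpleGraph.Walk.eq_of_length_eq_zero h3)
    have hP1 : (SimpleGraph.Walk.cons hadj.symm Qx).IsPath := hQxp.cons hyQx
    have heq : SimpleGraph.Walk.cons hadj.symm Qx = Qy := by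
      have := hT.IsAcyclic.path_unique ⟨_, hP1⟩ ⟨_, hQyp⟩
      exact congrArg Subtype.val this
    have : (SimpleGraph.Walk.cons hadj.symm Qx).length = Qy.length := by rw [heq]
    rw [SimpleGraph.Walk.length_cons, hQxl, hQyl] at this
    omega
  omega

lemma adj_par (hT : T.IsTree) {x y : V} (hadj : T.Adj x y) :
    par T r hT.isConnected y = x ∨ par T r hT.isConnected x = y := by
  rcases adj_dd T r hT hadj with h | h
  · exact Or.inl (parent_unique T r hT hadj.symm h).symm
  · exact Or.inr (parent_unique T r hT hadj h).symm

end Unique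

section Desc

variable (T : SimpleGraph V) (r : V)

set_option linter.unusedSectionVars false

/-- descendant relation (v is a descendant of u, inclusive) -/
def desc (hc : T.Connected) (u v : V) : Prop := ∃ n, (par T r hc)^[n] v = u

lemma desc_refl (hc : T.Connected) (u : V) : desc T r hc u u := ⟨0, rfl⟩

lemma dd_par_le (hc : T.Connected) (x : V) : dd T r (par T r hc x) ≤ dd T r x := by
  by_cases hx : x = r
  · subst hx; rw [par_root]
  · have := dd_par T r hc hx; omega

lemma dd_iter_le (hc : T.Connected) : ∀ (n : ℕ) (x : V),
    dd T r ((par T r hc)^[n] x) ≤ dd T r x := by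
  intro n
  induction n with
  | zero => intro x; simp
  | succ n ihn =>
    intro x
    rw [Function.iterate_succ_apply']
    exact le_trans (dd_par_le T r hc _) (ihn x)

lemma desc_dd_le (hc : T.Connected) {u v : V} (h : desc T r hc u v) :
    dd T r u ≤ dd T r v := by
  obtain ⟨n, rfl⟩ := h; exact dd_iter_le T r hc n v

lemma desc_of_child (hc : T.Connected) {u v w : V} (h : desc T r hc u v)
    (hw : par T r hc w = v) : desc T r hc u w := by
  obtain ⟨n, rfl⟩ := h
  exact ⟨n + 1, by rw [Function.iterate_succ_apply, hw]⟩

lemma desc_of_par (hc : T.Connected) {u v : V} (h : desc T r hc u (par T r hc v)) :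
    desc T r hc u v := by
  obtain ⟨n, hn⟩ := h
  exact ⟨n + 1, by rw [Function.iterate_succ_apply]; exact hn⟩

lemma desc_par (hc : T.Connected) {w v : V} (h : desc T r hc w v) (hvw : v ≠ w) :
    desc T r hc w (par T r hc v) := by
  obtain ⟨n, hn⟩ := h
  cases n with
  | zero => exact absurd hn hvw
  | succ m => exact ⟨m, by rw [Function.iterate_succ_apply] at hn; exact hn⟩

lemma iter_eq_of_dd_eq (hc : T.Connected) {w w' : V} (hw : w ≠ r) (k : ℕ)
    (hk : (par T r hc)^[k] w = w') (hdd : dd T r w' = dd T r w) : w' = w := by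
  cases k with
  | zero => exact hk.symm
  | succ m =>
    exfalso
    rw [Function.iterate_succ_apply] at hk
    have h1 : dd T r w' ≤ dd T r (par T r hc w) := hk ▸ dd_iter_le T r hc m _
    have h2 := dd_par T r hc hw
    omega

lemma children_desc_disjoint (hc : T.Connected) {u w w' v : V}
    (hw : w ≠ r) (hpw : par T r hc w = u) (hw' : w' ≠ r) (hpw' : par T r hc w' = u)
    (h : desc T r hc w v) (h' : desc T r hc w' v) : w = w' := by
  have hdw : dd T r w = dd T r u + 1 := by have := dd_par T r hc hw; rw [hpw] at this; omega
  have hdw' : dd T r w' = dd T r u + 1 := by have := dd_par T r hc hw'; rw [hpw'] at this; omega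
  obtain ⟨n, hn⟩ := h
  obtain ⟨m, hm⟩ := h'
  rcases le_total n m with hle | hle
  · have : (par T r hc)^[m - n] w = w' := by
      rw [← hn, ← Function.iterate_add_apply]
      rw [Nat.sub_add_cancel hle]
      exact hm
    exact (iter_eq_of_dd_eq T r hc hw (m - n) this (by omega)).symm
  · have : (par T r hc)^[n - m] w' = w := by
      rw [← hm, ← Function.iterate_add_apply]
      rw [Nat.sub_add_cancel hle]
      exact hn
    exact iter_eq_of_dd_eq T r hc hw' (n - m) this (by omega)

lemma not_desc_child (hc : T.Connected) {u w : V} (hw : w ≠ r)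
    (hpw : par T r hc w = u) : ¬ desc T r hc w u := by
  intro h
  have h1 := desc_dd_le T r hc h
  have h2 := dd_par T r hc hw
  rw [hpw] at h2
  omega

lemma desc_decomp (hc : T.Connected) {u v : V} (h : desc T r hc u v) (hvu : v ≠ u)
    (hur : u ≠ r) : ∃ w, w ≠ r ∧ par T r hc w = u ∧ desc T r hc w v := by
  obtain ⟨n, hn⟩ := h
  cases n with
  | zero => exact absurd hn hvu
  | succ m =>
    refine ⟨(par T r hc)^[m] v, ?_, ?_, ⟨m, rfl⟩⟩
    · intro hrr
      rw [Function.iterate_succ_apply', hrr, par_root] at hn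
      exact hur hn.symm
    · rw [← Function.iterate_succ_apply' (par T r hc) m v]
      exact hn

lemma desc_coverage (hc : T.Connected) {u0 : V} (hu0 : ∀ z, T.Adj r z → z = u0) :
    ∀ v, v ≠ r → desc T r hc u0 v := by
  suffices h : ∀ (k : ℕ) (v : V), dd T r v ≤ k → v ≠ r → desc T r hc u0 v by
    intro v hv; exact h (dd T r v) v le_rfl hv
  intro k
  induction k with
  | zero =>
    intro v hk hv
    exact absurd (dd_eq_zero T r hc (Nat.le_zero.1 hk)) hv
  | succ k ihk =>
    intro v hk hv
    by_cases hp : par T r hc v = r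
    · have : T.Adj r v := ((hp ▸ par_adj T r hc hv) : T.Adj v r).symm
      have : v = u0 := hu0 v this
      exact this ▸ desc_refl T r hc v
    · have hd := dd_par T r hc hv
      exact desc_of_par T r hc (ihk (par T r hc v) (by omega) hp)

end Desc

section DescTrans
variable (T : SimpleGraph V) (r : V)
set_option linter.unusedSectionVars false

lemma desc_trans (hc : T.Connected) {u w v : V} (h1 : desc T r hc u w)
    (h2 : desc T r hc w v) : desc T r hc u v := by
  obtain ⟨m, hm⟩ := h1
  obtain ⟨n, hn⟩ := h2
  refine ⟨m + n, ?_⟩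
  rw [Function.iterate_add_apply]
  rw [hn, hm]

lemma desc_child_self (hc : T.Connected) {u w : V} (hpw : par T r hc w = u) :
    desc T r hc u w := ⟨1, by simpa using hpw⟩

end DescTrans

lemma bxor_eq_iff : ∀ a f i : Bool, (Bool.xor a f = i) ↔ (a = Bool.xor i f) := by decide
lemma bxor_cancel' : ∀ a f : Bool, Bool.xor (Bool.xor a f) f = a := by decide
lemma bxor_tri : ∀ a t : Bool, Bool.xor t (Bool.xor a t) = a := by decide
lemma bxor_self_mid : ∀ a b : Bool, Bool.xor a (Bool.xor a b) = b := by decide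

section Cdeg

variable [Fintype V] (T : SimpleGraph V) (r : V)

set_option linter.unusedSectionVars false

noncomputable def cdeg (hc : T.Connected) (c : V → Bool) (i : Bool) (x : V) : ℕ :=
  (if x ≠ r ∧ c x = i then 1 else 0) +
  (Finset.univ.filter (fun w => w ≠ r ∧ par T r hc w = x ∧ c w = i)).card

lemma cdeg_congr (hc : T.Connected) {c₁ c₂ : V → Bool} (i : Bool) (x : V)
    (hx : c₁ x = c₂ x) (hch : ∀ w, w ≠ r → par T r hc w = x → c₁ w = c₂ w) :
    cdeg T r hc c₁ i x = cdeg T r hc c₂ i x := by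
  unfold cdeg
  congr 1
  · rw [hx]
  · congr 1
    apply Finset.ext
    intro w
    simp only [Finset.mem_filter, Finset.mem_univ, true_and]
    constructor
    · rintro ⟨h1, h2, h3⟩; exact ⟨h1, h2, by rw [← hch w h1 h2]; exact h3⟩
    · rintro ⟨h1, h2, h3⟩; exact ⟨h1, h2, by rw [hch w h1 h2]; exact h3⟩

lemma cdeg_xor (hc : T.Connected) (c : V → Bool) (f i : Bool) (x : V) :
    cdeg T r hc (fun v => Bool.xor (c v) f) i x = cdeg T r hc c (Bool.xor i f) x := by
  unfold cdeg
  congr 1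
  · simp only [bxor_eq_iff]
  · congr 1
    apply Finset.ext
    intro w
    simp only [Finset.mem_filter, Finset.mem_univ, true_and, bxor_eq_iff]

end Cdeg

section Main

variable [Fintype V] (T : SimpleGraph V) (r : V)

set_option linter.unusedSectionVars false

noncomputable def descF (hc : T.Connected) (u : V) : Finset V :=
  @Finset.filter _ (desc T r hc u) (Classical.decPred _) Finset.univ

lemma mem_descF (hc : T.Connected) {u v : V} : v ∈ descF T r hc u ↔ desc T r hc u v := by
  simp [descF, Finset.mem_filter]

lemma Qmain (hc : T.Connected) (hT : T.IsTree) :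
    ∀ (n : ℕ) (u : V), (descF T r hc u).card ≤ n → u ≠ r →
    ∃ c : V → Bool, ∀ v, desc T r hc u v → v ≠ u →
      cdeg T r hc c (c v) v ≠ cdeg T r hc c (c v) (par T r hc v) := by
  intro n
  induction n with
  | zero =>
    intro u hcard hur
    exfalso
    have : u ∈ descF T r hc u := (mem_descF T r hc).2 (desc_refl T r hc u)
    have := Finset.card_pos.2 ⟨u, this⟩
    omega
  | succ n ihn =>
    intro u hcard hur
    set K : Finset V := Finset.univ.filter (fun w => w ≠ r ∧ par T r hc w = u) with hKdef
    have hmemK : ∀ w, w ∈ K ↔ (w ≠ r ∧ par T r hc w = u) := by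
      intro w; simp [hKdef, Finset.mem_filter]
    -- children colorings from the inductive hypothesis
    have hchild : ∀ w : V, ∃ cw : V → Bool, w ∈ K →
        (∀ v, desc T r hc w v → v ≠ w →
          cdeg T r hc cw (cw v) v ≠ cdeg T r hc cw (cw v) (par T r hc v)) := by
      intro w
      by_cases hw : w ∈ K
      · obtain ⟨hwr, hwp⟩ := (hmemK w).1 hw
        have hsub : descF T r hc w ⊆ descF T r hc u := by
          intro v hv
          rw [mem_descF] at hv ⊢
          exact desc_trans T r hc (desc_child_self T r hc hwp) hv
        have hnm : u ∉ descF T r hc w := by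
          rw [mem_descF]
          exact not_desc_child T r hc hwr hwp
        have hlt : (descF T r hc w).card < (descF T r hc u).card := by
          apply Finset.card_lt_card
          rw [Finset.ssubset_iff_of_subset hsub]
          exact ⟨u, (mem_descF T r hc).2 (desc_refl T r hc u), hnm⟩
        obtain ⟨c, hcq⟩ := ihn w (by omega) hwr
        exact ⟨c, fun _ => hcq⟩
      · exact ⟨fun _ => false, fun h => absurd h hw⟩
    choose cc hcc using hchild
    set D : V → ℕ := fun w => cdeg T r hc (cc w) (cc w w) w with hDdef
    obtain ⟨S, hSK, hin, hout⟩ := aliec_core K.card K rfl 1 0 (by omega) D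
    set target : V → Bool := fun w => if w ∈ S then false else true with htargetdef
    set g : V → V → Bool :=
      fun w v => Bool.xor (cc w v) (Bool.xor (cc w w) (target w)) with hgdef
    haveI hdecd : ∀ v : V, Decidable (∃ w, w ∈ K ∧ desc T r hc w v) :=
      fun v => Classical.dec _
    set c : V → Bool :=
      fun v => if h : ∃ w, w ∈ K ∧ desc T r hc w v then g h.choose v else false with hcdef
    -- c agrees with g w0 on descendants of w0
    have hcdesc : ∀ w0, w0 ∈ K → ∀ v, desc T r hc w0 v → c v = g w0 v := by
      intro w0 hw0 v hv
      have hx : ∃ w, w ∈ K ∧ desc T r hc w v := ⟨w0, hw0, hv⟩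
      have hchoose : hx.choose = w0 := by
        obtain ⟨hcK, hcd⟩ := hx.choose_spec
        obtain ⟨h1, h2⟩ := (hmemK _).1 hcK
        obtain ⟨h3, h4⟩ := (hmemK _).1 hw0
        exact children_desc_disjoint T r hc h1 h2 h3 h4 hcd hv
      rw [hcdef]
      simp only
      rw [dif_pos hx, hchoose]
    have hgww : ∀ w, g w w = target w := by
      intro w
      rw [hgdef]
      simp only
      rw [bxor_self_mid]
    have hcu : c u = false := by
      rw [hcdef]
      simp only
      rw [dif_neg]
      rintro ⟨w, hwK, hdesc⟩
      obtain ⟨h1, h2⟩ := (hmemK w).1 hwK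
      exact not_desc_child T r hc h1 h2 hdesc
    -- cdeg of c transported to the child colorings
    have htrans : ∀ w0, w0 ∈ K → ∀ x, desc T r hc w0 x → ∀ i,
        cdeg T r hc c i x =
          cdeg T r hc (cc w0) (Bool.xor i (Bool.xor (cc w0 w0) (target w0))) x := by
      intro w0 hw0 x hx i
      have h1 : cdeg T r hc c i x =
          cdeg T r hc (fun v => Bool.xor (cc w0 v) (Bool.xor (cc w0 w0) (target w0))) i x := by
        apply cdeg_congr
        · rw [hcdesc w0 hw0 x hx]
        · intro w hwr hwp
          rw [hcdesc w0 hw0 w (desc_of_child T r hc hx hwp)]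
      rw [h1, cdeg_xor]
    -- cdeg of c at u
    have hcdegu_false : cdeg T r hc c false u = 1 + S.card := by
      unfold cdeg
      have hif : (if u ≠ r ∧ c u = false then 1 else 0) = 1 := by
        rw [if_pos ⟨hur, hcu⟩]
      rw [hif]
      congr 1
      have : Finset.univ.filter (fun w => w ≠ r ∧ par T r hc w = u ∧ c w = false) = S := by
        apply Finset.ext
        intro w
        simp only [Finset.mem_filter, Finset.mem_univ, true_and]
        constructor
        · rintro ⟨h1, h2, h3⟩
          have hwK : w ∈ K := (hmemK w).2 ⟨h1, h2⟩
          rw [hcdesc w hwK w (desc_refl T r hc w), hgww] at h3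
          rw [htargetdef] at h3
          simp only at h3
          by_contra hws
          rw [if_neg hws] at h3
          exact Bool.noConfusion h3
        · intro hwS
          have hwK := hSK hwS
          obtain ⟨h1, h2⟩ := (hmemK w).1 hwK
          refine ⟨h1, h2, ?_⟩
          rw [hcdesc w hwK w (desc_refl T r hc w), hgww, htargetdef]
          simp only
          rw [if_pos hwS]
      rw [this]
    have hcdegu_true : cdeg T r hc c true u = K.card - S.card := by
      unfold cdeg
      have hif : (if u ≠ r ∧ c u = true then 1 else 0) = 0 := by
        rw [if_neg]
        rintro ⟨_, hcu'⟩
        rw [hcu] at hcu'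
        exact Bool.noConfusion hcu'
      rw [hif]
      have : Finset.univ.filter (fun w => w ≠ r ∧ par T r hc w = u ∧ c w = true) = K \ S := by
        apply Finset.ext
        intro w
        simp only [Finset.mem_filter, Finset.mem_univ, true_and, Finset.mem_sdiff]
        constructor
        · rintro ⟨h1, h2, h3⟩
          have hwK : w ∈ K := (hmemK w).2 ⟨h1, h2⟩
          refine ⟨hwK, ?_⟩
          rw [hcdesc w hwK w (desc_refl T r hc w), hgww, htargetdef] at h3
          simp only at h3
          intro hws
          rw [if_pos hws] at h3
          exact Bool.noConfusion h3
        · rintro ⟨hwK, hws⟩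
          obtain ⟨h1, h2⟩ := (hmemK w).1 hwK
          refine ⟨h1, h2, ?_⟩
          rw [hcdesc w hwK w (desc_refl T r hc w), hgww, htargetdef]
          simp only
          rw [if_neg hws]
      rw [this, Finset.card_sdiff_of_subset hSK]
      omega
    -- finish
    refine ⟨c, ?_⟩
    intro v hv hvu
    obtain ⟨w0, hw0r, hw0p, hw0d⟩ := desc_decomp T r hc hv hvu hur
    have hw0K : w0 ∈ K := (hmemK w0).2 ⟨hw0r, hw0p⟩
    by_cases hvw0 : v = w0
    · -- the edge from w0 to u
      subst hvw0
      have hcv : c v = target v := by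
        rw [hcdesc v hw0K v (desc_refl T r hc v), hgww]
      have hL : cdeg T r hc c (c v) v = D v := by
        rw [htrans v hw0K v (desc_refl T r hc v), hcv, bxor_tri, hDdef]
      rw [hL, hw0p]
      by_cases hvS : v ∈ S
      · have : c v = false := by rw [hcv, htargetdef]; simp only; rw [if_pos hvS]
        rw [this, hcdegu_false]
        have := hin v hvS
        omega
      · have : c v = true := by rw [hcv, htargetdef]; simp only; rw [if_neg hvS]
        rw [this, hcdegu_true]
        have := hout v hw0K hvS
        omega
    · -- an edge inside the subtree of w0
      have hpv : desc T r hc w0 (par T r hc v) := desc_par T r hc hw0d hvw0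
      have hcveq : c v = Bool.xor (cc w0 v) (Bool.xor (cc w0 w0) (target w0)) := by
        rw [hcdesc w0 hw0K v hw0d, hgdef]
      have hxor : Bool.xor (c v) (Bool.xor (cc w0 w0) (target w0)) = cc w0 v := by
        rw [hcveq, bxor_cancel']
      rw [htrans w0 hw0K v hw0d, htrans w0 hw0K (par T r hc v) hpv, hxor]
      exact hcc w0 hw0K v hw0d hvw0

end Main


end AliecDev

/-- Every shrub (a tree rooted at a leaf `r`) admits an almost locally irregular
2-edge coloring: a 2-edge coloring in which every edge other than the root edge
(the unique edge incident to `r`) is locally irregular in its color class. -/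
theorem shrub_admits_two_aliec
    [Fintype V] (T : SimpleGraph V) [DecidableRel T.Adj]
    (hT : T.IsTree) (r : V) (hr : T.degree r = 1) :
    ∃ c : Sym2 V → ℕ, (∀ e ∈ T.edgeSet, c e < 2) ∧
      ∀ x y, T.Adj x y → x ≠ r → y ≠ r →
        colorDeg T c (c s(x, y)) x ≠ colorDeg T c (c s(x, y)) y := by
  classical
  letI : DecidableEq V := Classical.decEq V
  have hc := hT.isConnected
  -- the unique neighbor of the root
  have hcard1 : (T.neighborFinset r).card = 1 := hr
  obtain ⟨u0, hu0⟩ := Finset.card_eq_one.1 hcard1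
  have hu0adj : T.Adj r u0 := by
    have h : u0 ∈ T.neighborFinset r := by rw [hu0]; exact Finset.mem_singleton_self u0
    rwa [SimpleGraph.mem_neighborFinset] at h
  have huniq : ∀ z, T.Adj r z → z = u0 := by
    intro z hz
    have h : z ∈ T.neighborFinset r := (SimpleGraph.mem_neighborFinset _ _ _).2 hz
    rwa [hu0, Finset.mem_singleton] at h
  have hu0r : u0 ≠ r := fun h => T.irrefl (h ▸ hu0adj)
  obtain ⟨cB, hcB⟩ := Qmain T r hc hT (descF T r hc u0).card u0 le_rfl hu0r
  -- the edge coloring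
  set cv : Bool → ℕ := fun b => cond b 1 0 with hcv
  have hcvinj : ∀ a b : Bool, cv a = cv b → a = b := by decide
  set f : V → V → ℕ := fun x y =>
    if dd T r x < dd T r y then cv (cB y) else if dd T r y < dd T r x then cv (cB x) else 0
    with hf
  have hfsymm : ∀ x y, f x y = f y x := by
    intro x y
    simp only [hf]
    rcases lt_trichotomy (dd T r x) (dd T r y) with h | h | h
    · rw [if_pos h, if_neg (lt_asymm h), if_pos h]
    · rw [if_neg (by omega), if_neg (by omega), if_neg (by omega), if_neg (by omega)]
    · rw [if_neg (lt_asymm h), if_pos h, if_pos h]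
  set c' : Sym2 V → ℕ := Sym2.lift ⟨f, hfsymm⟩ with hc'
  have hc'eval : ∀ x y, c' s(x, y) = f x y := fun x y => Sym2.lift_mk _ x y
  -- value on an edge from a vertex to its parent
  have hedgecol : ∀ v, v ≠ r → c' s(v, par T r hc v) = cv (cB v) := by
    intro v hv
    have hdp := dd_par T r hc hv
    rw [hc'eval]
    simp only [hf]
    rw [if_neg (by omega), if_pos (by omega)]
  -- colorDeg equals cdeg
  have hcdeq : ∀ (x : V) (b : Bool), colorDeg T c' (cv b) x = cdeg T r hc cB b x := by
    intro x b
    have hset : {y | T.Adj x y ∧ c' s(x, y) = cv b} =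
        ↑(Finset.univ.filter (fun y => T.Adj x y ∧ c' s(x, y) = cv b)) := by
      ext y
      simp [Finset.mem_filter]
    rw [colorDeg, hset, Set.ncard_coe_finset]
    set F1 : Finset V :=
      Finset.univ.filter (fun w => w ≠ r ∧ par T r hc w = x ∧ cB w = b) with hF1
    set F2 : Finset V := if x ≠ r ∧ cB x = b then {par T r hc x} else ∅ with hF2
    have hsplit : Finset.univ.filter (fun y => T.Adj x y ∧ c' s(x, y) = cv b) = F1 ∪ F2 := by
      apply Finset.ext
      intro y
      simp only [Finset.mem_filter, Finset.mem_univ, true_and, Finset.mem_union, hF1, hF2]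
      constructor
      · rintro ⟨hadj, hcol⟩
        rcases adj_par T r hT hadj with hpy | hpx
        · left
          have hyr : y ≠ r := by
            intro hyr
            subst hyr
            rw [par_root] at hpy
            exact T.irrefl (hpy ▸ hadj)
          have hcol2 : c' s(x, y) = cv (cB y) := by
            rw [← hpy] at hcol ⊢
            rw [Sym2.eq_swap]
            exact hedgecol y hyr
          exact ⟨hyr, hpy, hcvinj _ _ (hcol2.symm.trans hcol)⟩
        · right
          have hxr : x ≠ r := by
            intro hxr
            subst hxr
            rw [par_root] at hpx
            exact T.irrefl (hpx ▸ hadj)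
          have hcol2 : c' s(x, y) = cv (cB x) := by
            rw [← hpx] at hcol ⊢
            exact hedgecol x hxr
          have hcbx : cB x = b := hcvinj _ _ (hcol2.symm.trans hcol)
          rw [if_pos ⟨hxr, hcbx⟩, Finset.mem_singleton]
          exact hpx.symm
      · intro hmem
        rcases hmem with hmem | hmem
        · obtain ⟨hyr, hpy, hcby⟩ := hmem
          have hadj : T.Adj x y := by
            have := par_adj T r hc hyr
            rw [hpy] at this
            exact this.symm
          refine ⟨hadj, ?_⟩
          rw [← hpy, Sym2.eq_swap, hedgecol y hyr, hcby]
        · by_cases hcond : x ≠ r ∧ cB x = b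
          · rw [if_pos hcond, Finset.mem_singleton] at hmem
            subst hmem
            refine ⟨par_adj T r hc hcond.1, ?_⟩
            rw [hedgecol x hcond.1, hcond.2]
          · rw [if_neg hcond] at hmem
            exact absurd hmem (Finset.notMem_empty _)
    rw [hsplit]
    have hdisj : Disjoint F1 F2 := by
      rw [Finset.disjoint_left]
      intro y hy1 hy2
      simp only [hF1, Finset.mem_filter, Finset.mem_univ, true_and] at hy1
      obtain ⟨hyr, hpy, _⟩ := hy1
      by_cases hcond : x ≠ r ∧ cB x = b
      · rw [hF2, if_pos hcond, Finset.mem_singleton] at hy2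
        subst hy2
        have h1 := dd_par T r hc hyr
        have h2 := dd_par T r hc hcond.1
        rw [hpy] at h1
        omega
      · rw [hF2, if_neg hcond] at hy2
        exact absurd hy2 (Finset.notMem_empty _)
    rw [Finset.card_union_of_disjoint hdisj]
    have hF2card : F2.card = if x ≠ r ∧ cB x = b then 1 else 0 := by
      by_cases hcond : x ≠ r ∧ cB x = b
      · rw [hF2, if_pos hcond, if_pos hcond, Finset.card_singleton]
      · rw [hF2, if_neg hcond, if_neg hcond, Finset.card_empty]
    rw [hF2card, cdeg]
    rw [Nat.add_comm]

  -- conclude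
  refine ⟨c', ?_, ?_⟩
  · intro e _
    induction e using Sym2.ind with
    | _ x y =>
      rw [hc'eval]
      simp only [hf]
      split
      · cases cB y <;> simp [hcv]
      · split
        · cases cB x <;> simp [hcv]
        · omega
  · intro x y hadj hx hy
    have haux : ∀ a b : V, T.Adj a b → a ≠ r → b ≠ r → par T r hc b = a →
        colorDeg T c' (c' s(a, b)) a ≠ colorDeg T c' (c' s(a, b)) b := by
      intro a b hab ha hb hpb
      have hcol : c' s(a, b) = cv (cB b) := by
        rw [← hpb, Sym2.eq_swap]
        exact hedgecol b hb
      rw [hcol, hcdeq a (cB b), hcdeq b (cB b)]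
      have hbu0 : b ≠ u0 := by
        intro hbu
        subst hbu
        have hpu0 : par T r hc b = r := by
          rcases adj_par T r hT hu0adj with h | h
          · exact h
          · rw [par_root] at h
            exact absurd h.symm hb
        rw [hpu0] at hpb
        exact ha hpb.symm
      have hdesc : desc T r hc u0 b := desc_coverage T r hc huniq b hb
      have := hcB b hdesc hbu0
      rw [hpb] at this
      exact this.symm
    rcases adj_par T r hT hadj with hpy | hpx
    · exact haux x y hadj hx hy hpy
    · have h := haux y x hadj.symm hy hx hpx
      rw [Sym2.eq_swap] at h
      exact fun heq => h heq.symm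
end

section
/- Every colorable tree T satisfies χ'_irr(T) ≤ 3. -/
/-!
Root the tree at a leaf `r`. For `x ≠ r`, colour the edges below `x` together with the edge from
`x` to its parent, and record the degree `v` of `x` in the colour of that parent edge: the parent
edge is irregular exactly when the parent's degree in that colour is not `v`. Inductively from the
leaves, every `x ≠ r` is *flexible* (two different values of `v` are attainable with 3 colours) or
*rigid* with value 1 or 2 (that value is attainable with 3 colours, and no other value with any
number of colours). A leaf is rigid with value 1; a vertex with a single child is flexible if the
child is, and rigid with value `3 - k` if the child is rigid with value `k`; a vertex with `d ≥ 2`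
children is flexible, attaining `d + 1` (all child edges in the parent's colour) and some value at
most 2. At the root, whose only child is `t`, a 3-colouring exists unless `t` is rigid with
value 1, and in that case no locally irregular colouring exists at all.
-/

open SimpleGraph

variable {V : Type*}

namespace SimpleGraph

variable {T : SimpleGraph V} {r x y z t : V}

lemma Walk.dist_add_dist_le_length {u v w : V} (p : T.Walk u v) (hw : w ∈ p.support) :
    T.dist u w + T.dist w v ≤ p.length := by
  classical
  have hlen := congrArg Walk.length (p.take_spec hw)
  rw [Walk.length_append] at hlen
  have := dist_le (p.takeUntil w hw)
  have := dist_le (p.dropUntil w hw)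
  omega

lemma Connected.exists_adj_dist_add_one (hT : T.Connected) (hx : x ≠ r) :
    ∃ y, T.Adj y x ∧ T.dist r y + 1 = T.dist r x := by
  obtain ⟨p, hp⟩ := hT.exists_walk_length_eq_dist x r
  cases p with
  | nil => exact absurd rfl hx
  | @cons _ y _ hxy q =>
    refine ⟨y, hxy.symm, ?_⟩
    have hq : T.dist r y ≤ q.length := dist_comm.trans_le (dist_le q)
    have hxr : T.dist r x ≤ T.dist r y + T.dist y x := hT.dist_triangle
    rw [dist_eq_one_iff_adj.mpr hxy.symm] at hxr
    rw [Walk.length_cons, dist_comm] at hp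
    omega

lemma IsTree.eq_of_adj_of_dist_add_one (hT : T.IsTree) (hy : T.Adj y x) (hz : T.Adj z x)
    (hdy : T.dist r y + 1 = T.dist r x) (hdz : T.dist r z + 1 = T.dist r x) : y = z := by
  obtain ⟨p, hp, hpl⟩ := hT.connected.exists_path_of_dist r y
  obtain ⟨q, hq, hql⟩ := hT.connected.exists_path_of_dist r z
  have hxp : x ∉ p.support := fun h => by have := p.dist_add_dist_le_length h; omega
  have hxq : x ∉ q.support := fun h => by have := q.dist_add_dist_le_length h; omega
  -- acyclicity: the path `q ++ [x]` from `r` to `x` must pass through the neighbour `y` of `x`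
  have hyq : y ∈ q.support := by
    by_contra hyq
    have hyq' : y ∉ (q.concat hz).support := by
      rw [Walk.support_concat, List.mem_append, List.mem_singleton]
      exact fun h => h.elim hyq hy.ne
    exact hxp (hT.isAcyclic.mem_support_of_ne_mem_support_of_adj_of_isPath hp
      (hq.concat hxq hz) hy hyq')
  have := q.dist_add_dist_le_length hyq
  exact hT.connected.dist_eq_zero_iff.mp (by omega)

open scoped Classical in
noncomputable def parent (T : SimpleGraph V) (r x : V) : V :=
  if h : ∃ y, T.Adj y x ∧ T.dist r y + 1 = T.dist r x then h.choose else x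

lemma Connected.parent_spec (hT : T.Connected) (hx : x ≠ r) :
    T.Adj (T.parent r x) x ∧ T.dist r (T.parent r x) + 1 = T.dist r x := by
  have h := hT.exists_adj_dist_add_one hx
  rw [parent, dif_pos h]
  exact h.choose_spec

lemma IsTree.parent_eq (hT : T.IsTree) (hyx : T.Adj y x) (hd : T.dist r y + 1 = T.dist r x) :
    T.parent r x = y :=
  have hx : x ≠ r := by rintro rfl; simp at hd
  hT.eq_of_adj_of_dist_add_one (hT.connected.parent_spec hx).1 hyx
    (hT.connected.parent_spec hx).2 hd

lemma Connected.dist_iterate_parent (hT : T.Connected) {k : ℕ} (hk : k ≤ T.dist r y) :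
    T.dist r ((T.parent r)^[k] y) + k = T.dist r y := by
  induction k with
  | zero => rfl
  | succ k ih =>
    have ih := ih (by omega)
    have hne : (T.parent r)^[k] y ≠ r := by rintro h; rw [h, dist_self] at ih; omega
    rw [Function.iterate_succ_apply', ← ih, ← (hT.parent_spec hne).2]
    ring

open scoped Classical in
noncomputable def children [Fintype V] (T : SimpleGraph V) (r x : V) : Finset V :=
  Finset.univ.filter fun y => T.Adj x y ∧ T.dist r y = T.dist r x + 1

def descendants (T : SimpleGraph V) (r x : V) : Set V :=
  {y | ∃ k, (T.parent r)^[k] y = x ∧ T.dist r y = T.dist r x + k}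

lemma descendants_trans (hy : y ∈ T.descendants r z) (hz : z ∈ T.descendants r x) :
    y ∈ T.descendants r x := by
  obtain ⟨k, hk, hdk⟩ := hy
  obtain ⟨l, hl, hdl⟩ := hz
  exact ⟨l + k, by rw [Function.iterate_add_apply, hk, hl], by omega⟩

section children

variable [Fintype V]

lemma mem_children : t ∈ T.children r x ↔ T.Adj x t ∧ T.dist r t = T.dist r x + 1 := by
  simp [children]

lemma ne_root_of_mem_children (ht : t ∈ T.children r x) : t ≠ r := by
  rintro rfl
  simp [mem_children] at ht

lemma self_notMem_children : x ∉ T.children r x := by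
  simp [mem_children]

lemma ne_of_mem_children (ht : t ∈ T.children r x) : t ≠ x := by
  rintro rfl
  exact self_notMem_children ht

lemma mem_children_root : t ∈ T.children r r ↔ T.Adj r t := by
  rw [mem_children, dist_self, zero_add, dist_eq_one_iff_adj, and_self]

lemma IsTree.parent_of_mem_children (hT : T.IsTree) (ht : t ∈ T.children r x) :
    T.parent r t = x :=
  hT.parent_eq (mem_children.mp ht).1 (mem_children.mp ht).2.symm

lemma IsTree.mem_descendants_of_mem_children (hT : T.IsTree) (ht : t ∈ T.children r x) :
    t ∈ T.descendants r x :=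
  ⟨1, hT.parent_of_mem_children ht, (mem_children.mp ht).2⟩

lemma IsTree.descendants_subset_of_mem_children (hT : T.IsTree) (ht : t ∈ T.children r x) :
    T.descendants r t ⊆ T.descendants r x :=
  fun _ hy => descendants_trans hy (hT.mem_descendants_of_mem_children ht)

lemma notMem_descendants_of_mem_children (ht : t ∈ T.children r x) :
    x ∉ T.descendants r t := by
  rintro ⟨k, -, hd⟩
  rw [(mem_children.mp ht).2] at hd
  omega

lemma iterate_parent_of_mem_descendants (ht : t ∈ T.children r x) (hy : y ∈ T.descendants r t) :
    (T.parent r)^[T.dist r y - (T.dist r x + 1)] y = t := by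
  obtain ⟨k, hk, hd⟩ := hy
  rw [hd, (mem_children.mp ht).2, Nat.add_sub_cancel_left]
  exact hk

lemma Connected.exists_mem_children_of_mem_descendants (hT : T.Connected)
    (hy : y ∈ T.descendants r x) (hyx : y ≠ x) : ∃ t ∈ T.children r x, y ∈ T.descendants r t := by
  obtain ⟨_ | j, hk, hd⟩ := hy
  · exact absurd hk hyx
  have hj := hT.dist_iterate_parent (r := r) (y := y) (k := j) (by omega)
  set t := (T.parent r)^[j] y
  have htr : t ≠ r := by rintro h; rw [h, dist_self] at hj; omega
  have hpt : T.parent r t = x := by rw [← hk, Function.iterate_succ_apply']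
  refine ⟨t, mem_children.mpr ⟨hpt ▸ (hT.parent_spec htr).1, by omega⟩, j, rfl, by omega⟩

lemma IsTree.ncard_descendants_lt (hT : T.IsTree) (ht : t ∈ T.children r x) :
    (T.descendants r t).ncard < (T.descendants r x).ncard :=
  Set.ncard_lt_ncard ⟨hT.descendants_subset_of_mem_children ht, fun h =>
    notMem_descendants_of_mem_children ht (h ⟨0, rfl, rfl⟩)⟩ (Set.toFinite _)

lemma IsTree.adj_iff_mem_children_or_eq_parent (hT : T.IsTree) :
    T.Adj x y ↔ y ∈ T.children r x ∨ (x ≠ r ∧ y = T.parent r x) := by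
  refine ⟨fun hxy => ?_, ?_⟩
  · rcases hT.dist_eq_dist_add_one_of_adj r hxy with h | h
    · have hx : x ≠ r := by rintro rfl; simp at h
      exact .inr ⟨hx, (hT.parent_eq hxy.symm h.symm).symm⟩
    · exact .inl (mem_children.mpr ⟨hxy, h⟩)
  · rintro (h | ⟨hx, rfl⟩)
    · exact (mem_children.mp h).1
    · exact (hT.connected.parent_spec hx).1.symm

end children

lemma Connected.parent_mem_descendants (hT : T.Connected) (hy : y ∈ T.descendants r x)
    (hyx : y ≠ x) : T.parent r y ∈ T.descendants r x := by
  obtain ⟨_ | j, hk, hd⟩ := hy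
  · exact absurd hk hyx
  have hyr : y ≠ r := by rintro rfl; simp at hd
  exact ⟨j, by rwa [← Function.iterate_succ_apply], by have := (hT.parent_spec hyr).2; omega⟩

lemma Connected.mem_descendants_root (hT : T.Connected) : y ∈ T.descendants r r := by
  have h := hT.dist_iterate_parent (r := r) (y := y) le_rfl
  exact ⟨T.dist r y, (hT.dist_eq_zero_iff.mp (by omega)).symm, by simp⟩

end SimpleGraph

namespace LocallyIrregular

open Finset

variable {T : SimpleGraph V} {r x y t : V}

noncomputable def edgeColoring (T : SimpleGraph V) (r : V) (g : V → ℕ) : Sym2 V → ℕ :=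
  Sym2.lift ⟨fun a b => if T.dist r a < T.dist r b then g b
    else if T.dist r b < T.dist r a then g a else 0, fun a b => by
      dsimp only
      split_ifs <;> first | rfl | omega⟩

lemma edgeColoring_parent (hT : T.Connected) (g : V → ℕ) (hy : y ≠ r) :
    edgeColoring T r g s(T.parent r y, y) = g y := by
  have := (hT.parent_spec hy).2
  simp only [edgeColoring, Sym2.lift_mk]
  rw [if_pos (by omega)]

variable [Fintype V]

open scoped Classical in
/-- The `i`-coloured degree of `x` in the edge colouring giving colour `g y` to the edge between
`y ≠ r` and its parent. -/
noncomputable def parentColorDeg (T : SimpleGraph V) (r : V) (g : V → ℕ) (i : ℕ) (x : V) : ℕ :=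
  #{y ∈ T.children r x | g y = i} + if x ≠ r ∧ g x = i then 1 else 0

def IrregularAt (T : SimpleGraph V) (r : V) (g : V → ℕ) (y : V) : Prop :=
  parentColorDeg T r g (g y) (T.parent r y) ≠ parentColorDeg T r g (g y) y

def IrregularBelow (T : SimpleGraph V) (r : V) (g : V → ℕ) (x : V) : Prop :=
  ∀ y ∈ T.descendants r x, y ≠ x → IrregularAt T r g y

def Achievable (T : SimpleGraph V) (r x : V) (p v : ℕ) : Prop :=
  ∃ g : V → ℕ, g x = p ∧ (∀ y ∈ T.descendants r x, y ≠ x → g y < 3) ∧ IrregularBelow T r g x ∧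
    parentColorDeg T r g p x = v

def Realizable (T : SimpleGraph V) (r x : V) (v : ℕ) : Prop :=
  ∃ g : V → ℕ, IrregularBelow T r g x ∧ parentColorDeg T r g (g x) x = v

def IsFlexible (T : SimpleGraph V) (r x : V) : Prop :=
  ∃ v w, v ≠ w ∧ Achievable T r x 0 v ∧ Achievable T r x 0 w

def IsRigid (T : SimpleGraph V) (r x : V) (k : ℕ) : Prop :=
  Achievable T r x 0 k ∧ ∀ w, Realizable T r x w → w = k

def IsFlexibleOrRigid (T : SimpleGraph V) (r x : V) : Prop :=
  IsFlexible T r x ∨ IsRigid T r x 1 ∨ IsRigid T r x 2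

lemma parentColorDeg_congr {g g' : V → ℕ} (hx : g x = g' x)
    (hch : ∀ y ∈ T.children r x, g y = g' y) (i : ℕ) :
    parentColorDeg T r g i x = parentColorDeg T r g' i x := by
  rw [parentColorDeg, parentColorDeg, hx, filter_congr fun y hy => by rw [hch y hy]]

lemma parentColorDeg_of_ne (hx : x ≠ r) (g : V → ℕ) (i : ℕ) : parentColorDeg T r g i x =
    (∑ y ∈ T.children r x, if g y = i then 1 else 0) + if g x = i then 1 else 0 := by
  simp only [parentColorDeg, card_filter, ne_eq, hx, not_false_eq_true, true_and]

lemma parentColorDeg_comp {σ : ℕ → ℕ} (hσ : σ.Injective) (g : V → ℕ) (i : ℕ) (x : V) :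
    parentColorDeg T r (σ ∘ g) (σ i) x = parentColorDeg T r g i x := by
  classical
  unfold parentColorDeg
  congr 1
  · simp [hσ.eq_iff]
  · exact if_congr (by simp [hσ.eq_iff]) rfl rfl

lemma irregularAt_comp {σ : ℕ → ℕ} (hσ : σ.Injective) (g : V → ℕ) (y : V) :
    IrregularAt T r (σ ∘ g) y ↔ IrregularAt T r g y := by
  simp only [IrregularAt, Function.comp_apply, parentColorDeg_comp hσ]

lemma Achievable.realizable {p v : ℕ} (h : Achievable T r x p v) : Realizable T r x v := by
  obtain ⟨g, hgx, -, hirr, hv⟩ := h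
  exact ⟨g, hirr, hgx ▸ hv⟩

lemma Achievable.recolor {v : ℕ} (h : Achievable T r x 0 v) {p : ℕ} (hp : p < 3) :
    Achievable T r x p v := by
  obtain ⟨g, hgx, hg3, hirr, hv⟩ := h
  set σ := Equiv.swap 0 p
  have hσ3 : ∀ k < 3, σ k < 3 := by
    intro k hk
    rcases eq_or_ne k 0 with rfl | hk0
    · simpa [σ] using hp
    rcases eq_or_ne k p with rfl | hkp
    · simp [σ]
    · rwa [Equiv.swap_apply_of_ne_of_ne hk0 hkp]
  refine ⟨σ ∘ g, by simp [σ, hgx], fun y hy hyx => hσ3 _ (hg3 y hy hyx),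
    fun y hy hyx => (irregularAt_comp σ.injective g y).mpr (hirr y hy hyx), ?_⟩
  have hp0 : p = σ 0 := by simp [σ]
  rw [hp0, parentColorDeg_comp σ.injective, hv]

lemma exists_eq_on_descendants (g : V → V → ℕ) (p : ℕ) :
    ∃ G : V → ℕ, G x = p ∧ ∀ t ∈ T.children r x, ∀ y ∈ T.descendants r t, G y = g t y := by
  classical
  refine ⟨Function.update (fun y => g ((T.parent r)^[T.dist r y - (T.dist r x + 1)] y) y) x p,
    by simp, fun t ht y hy => ?_⟩
  have hyx : y ≠ x := by rintro rfl; exact notMem_descendants_of_mem_children ht hy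
  rw [Function.update_of_ne hyx, iterate_parent_of_mem_descendants ht hy]

lemma achievable_of_children (hT : T.IsTree) (col : V → ℕ)
    (hcol : ∀ t ∈ T.children r x, col t < 3)
    (hch : ∀ t ∈ T.children r x,
      ∃ v, v ≠ parentColorDeg T r col (col t) x ∧ Achievable T r t 0 v) :
    Achievable T r x (col x) (parentColorDeg T r col (col x) x) := by
  choose! v hv hach using hch
  choose! g hgt hg3 hirr hgv using fun t ht => (hach t ht).recolor (hcol t ht)
  obtain ⟨G, hGx, hG⟩ := exists_eq_on_descendants (T := T) (r := r) (x := x) g (col x)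
  have hGt : ∀ t ∈ T.children r x, G t = col t :=
    fun t ht => (hG t ht t ⟨0, rfl, rfl⟩).trans (hgt t ht)
  have hdegx := parentColorDeg_congr hGx hGt
  have hdeg : ∀ t ∈ T.children r x, ∀ z ∈ T.descendants r t, ∀ i,
      parentColorDeg T r G i z = parentColorDeg T r (g t) i z := fun t ht z hz =>
    parentColorDeg_congr (hG t ht z hz) fun y hy =>
      hG t ht y (descendants_trans (hT.mem_descendants_of_mem_children hy) hz)
  refine ⟨G, hGx, fun y hy hyx => ?_, fun y hy hyx => ?_, hdegx _⟩ <;>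
    obtain ⟨t, ht, hyt⟩ := hT.connected.exists_mem_children_of_mem_descendants hy hyx <;>
    obtain rfl | hyt' := eq_or_ne y t
  · exact hGt y ht ▸ hcol y ht
  · exact hG t ht y hyt ▸ hg3 t ht y hyt hyt'
  · rw [IrregularAt, hT.parent_of_mem_children ht, hGt y ht, hdegx, hdeg y ht y hyt, hgv y ht]
    exact (hv y ht).symm
  · rw [IrregularAt, hG t ht y hyt, hdeg t ht y hyt,
      hdeg t ht _ (hT.connected.parent_mem_descendants hyt hyt')]
    exact hirr t ht y hyt hyt'

lemma colorDeg_eq_parentColorDeg (hT : T.IsTree) {c : Sym2 V → ℕ} {g : V → ℕ}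
    (hcg : ∀ y, y ≠ r → c s(T.parent r y, y) = g y) (i : ℕ) (x : V) :
    colorDeg T c i x = parentColorDeg T r g i x := by
  classical
  have hS : {y | T.Adj x y ∧ c s(x, y) = i} = ↑({y ∈ T.children r x | g y = i} ∪
      if x ≠ r ∧ g x = i then {T.parent r x} else ∅) := by
    ext y
    have hchild : y ∈ T.children r x → c s(x, y) = g y := fun hy => by
      rw [← hT.parent_of_mem_children hy, hcg y (ne_root_of_mem_children hy)]
    have hpar : x ≠ r → c s(x, T.parent r x) = g x := fun hx => by
      rw [Sym2.eq_swap, hcg x hx]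
    rw [Set.mem_ofPred_eq, hT.adj_iff_mem_children_or_eq_parent (r := r), mem_coe, mem_union,
      mem_filter]
    split_ifs with h
    · rw [mem_singleton]
      constructor
      · rintro ⟨hy | ⟨hx, rfl⟩, hc⟩
        · exact .inl ⟨hy, hchild hy ▸ hc⟩
        · exact .inr rfl
      · rintro (⟨hy, hgy⟩ | rfl)
        · exact ⟨.inl hy, hchild hy ▸ hgy⟩
        · exact ⟨.inr ⟨h.1, rfl⟩, hpar h.1 ▸ h.2⟩
    · rw [or_iff_left (notMem_empty y)]
      constructor
      · rintro ⟨hy | ⟨hx, rfl⟩, hc⟩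
        · exact ⟨hy, hchild hy ▸ hc⟩
        · exact absurd ⟨hx, hpar hx ▸ hc⟩ h
      · rintro ⟨hy, hgy⟩
        exact ⟨.inl hy, hchild hy ▸ hgy⟩
  rw [colorDeg, hS, Set.ncard_coe_finset, card_union_of_disjoint, parentColorDeg]
  · split_ifs <;> simp
  · split_ifs with h
    · refine disjoint_singleton_right.mpr fun hp => ?_
      have := (mem_children.mp (mem_filter.mp hp).1).2
      have := (hT.connected.parent_spec h.1).2
      omega
    · exact disjoint_empty_right _

lemma irregularAt_of_isLocIrrColoring (hT : T.IsTree) {c : Sym2 V → ℕ}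
    (hc : IsLocIrrColoring T c) (hy : y ≠ r) :
    IrregularAt T r (fun y => c s(T.parent r y, y)) y := by
  have h := hc _ _ (hT.connected.parent_spec hy).1
  rwa [colorDeg_eq_parentColorDeg hT (fun _ _ => rfl),
    colorDeg_eq_parentColorDeg hT (fun _ _ => rfl)] at h

lemma isLIEC_edgeColoring (hT : T.IsTree) {g : V → ℕ} (hg3 : ∀ y, y ≠ r → g y < 3)
    (hirr : ∀ y, y ≠ r → IrregularAt T r g y) : IsLIEC T 3 (edgeColoring T r g) := by
  have hdeg := colorDeg_eq_parentColorDeg hT fun _ hy =>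
    edgeColoring_parent (r := r) hT.connected g hy
  refine ⟨fun e _ => ?_, fun x y hxy => ?_⟩
  · induction e with
    | h a b =>
      simp only [edgeColoring, Sym2.lift_mk]
      split_ifs
      · exact hg3 b (by rintro rfl; simp at *)
      · exact hg3 a (by rintro rfl; simp at *)
      · norm_num
  · rw [hdeg, hdeg]
    rcases (hT.adj_iff_mem_children_or_eq_parent (r := r)).mp hxy with hy | ⟨hx, rfl⟩
    · have hyr := ne_root_of_mem_children hy
      rw [← hT.parent_of_mem_children hy, edgeColoring_parent hT.connected g hyr]
      exact hirr y hyr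
    · rw [Sym2.eq_swap, edgeColoring_parent hT.connected g hx]
      exact (hirr x hx).symm

lemma IsFlexible.exists_achievable_ne (h : IsFlexible T r x) (f : ℕ) :
    ∃ v ≠ f, Achievable T r x 0 v := by
  obtain ⟨v, w, hvw, hv, hw⟩ := h
  obtain rfl | hvf := eq_or_ne v f
  exacts [⟨w, hvw.symm, hw⟩, ⟨v, hvf, hv⟩]

lemma IsFlexibleOrRigid.exists_achievable_ne_or_isRigid (h : IsFlexibleOrRigid T r x) (f : ℕ) :
    (∃ v ≠ f, Achievable T r x 0 v) ∨ IsRigid T r x f := by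
  obtain h | h | h := h
  · exact .inl (h.exists_achievable_ne f)
  · obtain rfl | hf := eq_or_ne f 1
    exacts [.inr h, .inl ⟨1, hf.symm, h.1⟩]
  · obtain rfl | hf := eq_or_ne f 2
    exacts [.inr h, .inl ⟨2, hf.symm, h.1⟩]

lemma IsFlexibleOrRigid.exists_achievable_ne_of_three_le (h : IsFlexibleOrRigid T r x) {f : ℕ}
    (hf : 3 ≤ f) : ∃ v ≠ f, Achievable T r x 0 v := by
  obtain h | h | h := h
  · exact h.exists_achievable_ne f
  · exact ⟨1, by omega, h.1⟩
  · exact ⟨2, by omega, h.1⟩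

section step

variable (hT : T.IsTree) (hx : x ≠ r)
include hT hx

lemma isRigid_one_of_children_eq_empty (h : T.children r x = ∅) : IsRigid T r x 1 := by
  refine ⟨?_, fun w ⟨g, _, hw⟩ => ?_⟩
  · simpa [parentColorDeg_of_ne hx, h] using
      achievable_of_children (r := r) (x := x) hT 0 (by simp [h]) (by simp [h])
  · simp [parentColorDeg_of_ne hx, h] at hw
    omega

lemma isFlexible_of_children_eq_singleton (h : T.children r x = {t}) (ht : IsFlexible T r t) :
    IsFlexible T r x := by
  classical
  have hxt : x ≠ t := (ne_of_mem_children (h ▸ mem_singleton_self t)).symm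
  have hach : ∀ c < 3, Achievable T r x 0 (if c = 0 then 2 else 1) := fun c hc => by
    have := achievable_of_children (r := r) (x := x) hT (fun s => if s = t then c else 0)
      (by simp [h, hc]) (by simp only [h, mem_singleton, forall_eq]; exact ht.exists_achievable_ne _)
    by_cases hc0 : c = 0 <;>
      simpa [parentColorDeg_of_ne hx, h, hxt, hc0, eq_comm (a := 0)] using this
  exact ⟨2, 1, by omega, hach 0 (by omega), hach 1 (by omega)⟩

lemma isRigid_of_children_eq_singleton (h : T.children r x = {t}) {k : ℕ} (hk : k = 1 ∨ k = 2)
    (ht : IsRigid T r t k) : IsRigid T r x (3 - k) := by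
  classical
  have htx : t ∈ T.children r x := h ▸ mem_singleton_self t
  have hxt : x ≠ t := (ne_of_mem_children htx).symm
  have hdeg (g : V → ℕ) (i : ℕ) : parentColorDeg T r g i x =
      (if g t = i then 1 else 0) + if g x = i then 1 else 0 := by
    rw [parentColorDeg_of_ne hx, h, sum_singleton]
  refine ⟨?_, fun w ⟨g, hirr, hw⟩ => ?_⟩
  · have := achievable_of_children (r := r) (x := x) hT (fun s => if s = t then k - 1 else 0)
      (by simp only [h, mem_singleton, forall_eq, if_true]; omega)
      (by
        simp only [h, mem_singleton, forall_eq]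
        exact ⟨k, by rw [hdeg]; simp [hxt]; split_ifs <;> omega, ht.1⟩)
    simp only [hxt, hdeg, if_false, if_true] at this
    convert this using 1
    split_ifs <;> omega
  · have hvt := ht.2 _ ⟨g, fun y hy hyt => hirr y (hT.descendants_subset_of_mem_children htx hy)
      (by rintro rfl; exact notMem_descendants_of_mem_children htx hy), rfl⟩
    have hirrt := hirr t (hT.mem_descendants_of_mem_children htx) hxt.symm
    rw [IrregularAt, hT.parent_of_mem_children htx, hvt, hdeg] at hirrt
    rw [hdeg] at hw
    split_ifs at hirrt hw <;> omega

lemma exists_achievable_le_two_of_children_eq_pair [DecidableEq V] {a b : V}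
    (hK : T.children r x = {a, b}) (hba : b ≠ a) (ha : IsRigid T r a 2)
    (hb : IsFlexibleOrRigid T r b) :
    ∃ v ≤ 2, Achievable T r x 0 v := by
  have hxa : x ≠ a := (ne_of_mem_children (hK ▸ mem_insert_self a {b})).symm
  have hxb : x ≠ b := (ne_of_mem_children (hK ▸ mem_insert_of_mem (mem_singleton_self b))).symm
  have hdeg (g : V → ℕ) (i : ℕ) : parentColorDeg T r g i x =
      (if g a = i then 1 else 0) + (if g b = i then 1 else 0) + if g x = i then 1 else 0 := by
    rw [parentColorDeg_of_ne hx, hK, sum_pair hba.symm]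
  -- colour the edges to `a`, `b` with 1, 2 if `b` can avoid the value 1, and with 1, 0 if not
  rcases hb.exists_achievable_ne_or_isRigid 1 with ⟨v, hv1, hvb⟩ | hb1
  · refine ⟨1, by omega, ?_⟩
    have := achievable_of_children (r := r) (x := x) hT
      (fun s => if s = a then 1 else if s = b then 2 else 0) (by simp [hK, hba])
      (by simp only [hK, mem_insert, mem_singleton, forall_eq_or_imp, forall_eq]
          exact ⟨⟨2, by simp [hdeg, hba, hxa, hxb], ha.1⟩,
            ⟨v, by simpa [hdeg, hba, hxa, hxb] using hv1, hvb⟩⟩)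
    simpa [hdeg, hba, hxa, hxb] using this
  · refine ⟨2, le_rfl, ?_⟩
    have := achievable_of_children (r := r) (x := x) hT
      (fun s => if s = a then 1 else 0) (by simp [hK, hba])
      (by simp only [hK, mem_insert, mem_singleton, forall_eq_or_imp, forall_eq]
          exact ⟨⟨2, by simp [hdeg, hba, hxa], ha.1⟩, ⟨1, by simp [hdeg, hba, hxa], hb1.1⟩⟩)
    simpa [hdeg, hba, hxa] using this

lemma exists_achievable_le_two (hd : 2 ≤ #(T.children r x))
    (hch : ∀ s ∈ T.children r x, IsFlexibleOrRigid T r s) : ∃ v ≤ 2, Achievable T r x 0 v := by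
  classical
  by_cases hall : ∀ s ∈ T.children r x, ∃ v ≠ #(T.children r x), Achievable T r s 0 v
  · -- colour 1 on every edge to a child
    refine ⟨1, by omega, ?_⟩
    have hxs : ∀ s ∈ T.children r x, s ≠ x := fun s hs => ne_of_mem_children hs
    have := achievable_of_children (r := r) (x := x) hT (fun s => if s = x then 0 else 1)
      (fun s hs => by simp [hxs s hs]) (fun s hs => ?_)
    · simpa [parentColorDeg_of_ne hx, self_notMem_children] using this
    · simpa [parentColorDeg_of_ne hx, hxs s hs, sum_ite, filter_ne', self_notMem_children]
        using hall s hs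
  -- otherwise a child is rigid with value `#(T.children r x)`, which must be 2
  push Not at hall
  obtain ⟨a, ha, hna⟩ := hall
  have ha2 : IsRigid T r a 2 ∧ #(T.children r x) = 2 := by
    rcases hch a ha with h | h | h
    · obtain ⟨v, hv, hva⟩ := h.exists_achievable_ne #(T.children r x)
      exact absurd hva (hna v hv)
    · exact absurd h.1 (hna 1 (by omega))
    · obtain hd2 | hd2 := eq_or_ne #(T.children r x) 2
      exacts [⟨h, hd2⟩, absurd h.1 (hna 2 hd2.symm)]
  obtain ⟨b, hb⟩ := card_eq_one.mp
    (by rw [card_erase_of_mem ha, ha2.2] : #((T.children r x).erase a) = 1)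
  have hK : T.children r x = {a, b} := by rw [← insert_erase ha, hb]
  exact exists_achievable_le_two_of_children_eq_pair hT hx hK
    (mem_erase.mp (hb ▸ mem_singleton_self b)).1 ha2.1 (hch b (by simp [hK]))

lemma isFlexible_of_two_le_card (hd : 2 ≤ #(T.children r x))
    (hch : ∀ s ∈ T.children r x, IsFlexibleOrRigid T r s) : IsFlexible T r x := by
  obtain ⟨v, hv, hva⟩ := exists_achievable_le_two hT hx hd hch
  have := achievable_of_children (r := r) (x := x) hT 0 (by simp) fun s hs => by
    simpa [parentColorDeg_of_ne hx] using
      (hch s hs).exists_achievable_ne_of_three_le (f := #(T.children r x) + 1) (by omega)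
  exact ⟨v, #(T.children r x) + 1, by omega, hva, by simpa [parentColorDeg_of_ne hx] using this⟩

end step

theorem isFlexibleOrRigid (hT : T.IsTree) {x : V} (hx : x ≠ r) : IsFlexibleOrRigid T r x := by
  have hch : ∀ s ∈ T.children r x, IsFlexibleOrRigid T r s := fun s hs =>
    have := hT.ncard_descendants_lt hs
    isFlexibleOrRigid hT (ne_root_of_mem_children hs)
  obtain h0 | h1 | h2 : #(T.children r x) = 0 ∨ #(T.children r x) = 1 ∨
      2 ≤ #(T.children r x) := by omega
  · exact .inr (.inl (isRigid_one_of_children_eq_empty hT hx (card_eq_zero.mp h0)))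
  · obtain ⟨t, ht⟩ := card_eq_one.mp h1
    rcases hch t (by simp [ht]) with h | h | h
    · exact .inl (isFlexible_of_children_eq_singleton hT hx ht h)
    · exact .inr (.inr (isRigid_of_children_eq_singleton hT hx ht (.inl rfl) h))
    · exact .inr (.inl (isRigid_of_children_eq_singleton hT hx ht (.inr rfl) h))
  · exact .inl (isFlexible_of_two_le_card hT hx h2 hch)
termination_by (T.descendants r x).ncard

lemma Achievable.exists_isLIEC (hT : T.IsTree) {p v : ℕ} (h : Achievable T r r p v) :
    ∃ c, IsLIEC T 3 c := by
  obtain ⟨g, -, hg3, hirr, -⟩ := h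
  exact ⟨_, isLIEC_edgeColoring hT (fun y => hg3 y hT.connected.mem_descendants_root)
    (fun y => hirr y hT.connected.mem_descendants_root)⟩

lemma not_isRigid_one_of_isLocIrrColoring (hT : T.IsTree) {c : Sym2 V → ℕ}
    (hc : IsLocIrrColoring T c) (hr : T.children r r = {t}) : ¬IsRigid T r t 1 := by
  intro ht
  have htr : t ∈ T.children r r := hr ▸ mem_singleton_self t
  set g : V → ℕ := fun y => c s(T.parent r y, y)
  have hirr : ∀ y, y ≠ r → IrregularAt T r g y :=
    fun y hy => irregularAt_of_isLocIrrColoring hT hc hy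
  have hv := ht.2 _ ⟨g, fun y hy _ => hirr y ?_, rfl⟩
  · have := hirr t (ne_root_of_mem_children htr)
    rw [IrregularAt, hT.parent_of_mem_children htr, hv] at this
    simp [parentColorDeg, hr, filter_singleton] at this
  · rintro rfl
    exact notMem_descendants_of_mem_children htr hy

end LocallyIrregular

open LocallyIrregular Finset

theorem colorable_tree_three_colors
    [Fintype V] (T : SimpleGraph V) (hT : T.IsTree) (hcol : IrrColorable T) :
    irrChromIndex T ≤ 3 := by
  classical
  suffices ∃ c, IsLIEC T 3 c from Nat.sInf_le this
  rcases subsingleton_or_nontrivial V with hV | hV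
  · exact ⟨0, fun _ _ => by norm_num, fun x y h => absurd (Subsingleton.elim x y) h.ne⟩
  obtain ⟨r, hr⟩ := hT.exists_vert_degree_one_of_nontrivial
  obtain ⟨t, hrt, huniq⟩ := degree_eq_one_iff_existsUnique_adj.mp hr
  have hch : T.children r r = {t} := by
    ext s
    rw [mem_children_root, mem_singleton]
    exact ⟨huniq s, fun h => h ▸ hrt⟩
  have htr : t ≠ r := ne_root_of_mem_children (hch ▸ mem_singleton_self t)
  rcases (isFlexibleOrRigid hT htr).exists_achievable_ne_or_isRigid 1 with ⟨v, hv, hvt⟩ | ht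
  · refine (achievable_of_children (r := r) (x := r) hT 0 (by simp) fun s hs => ?_).exists_isLIEC
      hT
    rw [hch, mem_singleton] at hs
    subst hs
    exact ⟨v, by simpa [parentColorDeg, hch, filter_singleton] using hv, hvt⟩
  · obtain ⟨-, c, -, hc⟩ := hcol
    exact absurd ht (not_isRigid_one_of_isLocIrrColoring hT hc hch)
end

section
/- Every graph in the class 𝔗 is a connected cactus graph with maximum degree at most 3 in which every cycle is a triangle and any two distinct triangles are vertex-disjoint. -/
open SimpleGraph

variable {V : Type*}

/-- Attach a path of length `n` to the vertex `u` of `G`: the new vertices are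
`Fin n`, and the path is `u, 0, 1, …, n-1`. -/
def attachPath {V : Type} (G : SimpleGraph V) (u : V) (n : ℕ) :
    SimpleGraph (V ⊕ Fin n) :=
  SimpleGraph.fromEdgeSet
    ((Sym2.map Sum.inl '' G.edgeSet) ∪
     {e | ∃ (h : 0 < n), e = s(Sum.inl u, Sum.inr ⟨0, h⟩)} ∪
     {e | ∃ (i j : Fin n), (j : ℕ) = (i : ℕ) + 1 ∧ e = s(Sum.inr i, Sum.inr j)})

/-- Attach to the vertex `u` of `G` a gadget consisting of a path of length `n`
starting at `u` (new vertices `Fin n`) followed by a triangle through the far end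
of the path (two further new vertices `Fin 2`).  Identifying `u` with the unique
degree-one vertex of a triangle with a pendant path of length `n` hanging at one
of its vertices yields exactly this graph. -/
def attachTrianglePath {V : Type} (G : SimpleGraph V) (u : V) (n : ℕ) :
    SimpleGraph (V ⊕ (Fin n ⊕ Fin 2)) :=
  SimpleGraph.fromEdgeSet
    ((Sym2.map Sum.inl '' G.edgeSet) ∪
     {e | ∃ (h : 0 < n), e = s(Sum.inl u, Sum.inr (Sum.inl ⟨0, h⟩))} ∪
     {e | ∃ (i j : Fin n), (j : ℕ) = (i : ℕ) + 1 ∧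
        e = s(Sum.inr (Sum.inl i), Sum.inr (Sum.inl j))} ∪
     {e | ∃ (h : 0 < n) (t : Fin 2),
        e = s(Sum.inr (Sum.inl ⟨n - 1, Nat.sub_lt h one_pos⟩), Sum.inr (Sum.inr t))} ∪
     {s(Sum.inr (Sum.inr 0), Sum.inr (Sum.inr 1))})

/-- `u` lies on a triangle of `G`. -/
def OnTriangle {V : Type} (G : SimpleGraph V) (u : V) : Prop :=
  ∃ x y, G.Adj u x ∧ G.Adj u y ∧ G.Adj x y

/-- The class 𝔗 of cactus graphs, defined recursively (up to isomorphism):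
the triangle `K₃` belongs to 𝔗, and for every `G ∈ 𝔗` and every vertex `u` of
degree `2` lying on a triangle of `G`, identifying `u` with an end-vertex of an
even length path, or with the unique degree-one vertex of a graph consisting of
a triangle with an odd length path hanging at one of its vertices, yields a
graph in 𝔗. -/
inductive InT : ∀ {V : Type}, SimpleGraph V → Prop
  | triangle : InT (⊤ : SimpleGraph (Fin 3))
  | iso {V W : Type} {G : SimpleGraph V} {H : SimpleGraph W} :
      InT G → G ≃g H → InT H
  | evenPath {V : Type} {G : SimpleGraph V} (u : V) (n : ℕ) :
      InT G → (G.neighborSet u).ncard = 2 → OnTriangle G u →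
      0 < n → Even n → InT (attachPath G u n)
  | oddTrianglePath {V : Type} {G : SimpleGraph V} (u : V) (n : ℕ) :
      InT G → (G.neighborSet u).ncard = 2 → OnTriangle G u →
      Odd n → InT (attachTrianglePath G u n)

/-!
Each recursive step joins a graph of 𝔗 by one new edge `u – v` to a disjoint new piece: a path
(even case) or a `(3, n)`-tadpole, a path ending in a triangle (odd case). An edge joining two
components is a bridge and lies on no cycle, so the cycles of the result are those of the two
pieces: triangles, any two of which are vertex-disjoint. Maximum degree `3` survives because `u`
has degree `2`, `v` has degree at most `2` in its piece, and each gains one neighbour.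
-/

namespace SimpleGraph

variable {W : Type*}

theorem isBridge_of_only_edge_leaving {G : SimpleGraph V} {a b : V} (S : Set V)
    (ha : a ∈ S) (hb : b ∉ S) (h : ∀ x y, G.Adj x y → x ∈ S → y ∉ S → s(x, y) = s(a, b)) :
    G.IsBridge s(a, b) := by
  rw [isBridge_iff]
  rintro ⟨p⟩
  obtain ⟨d, -, hd₁, hd₂⟩ := p.exists_boundary_dart S ha hb
  have hadj := d.adj
  rw [deleteEdges_adj] at hadj
  exact hadj.2 (h _ _ hadj.1 hd₁ hd₂)

theorem Walk.edgeSet_map_eq_edgeSet_map_iff {G : SimpleGraph V} {H : SimpleGraph W}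
    {f : G →g H} (hf : Function.Injective f) {a b c d : V} (p : G.Walk a b) (q : G.Walk c d) :
    (p.map f).edgeSet = (q.map f).edgeSet ↔ p.edgeSet = q.edgeSet := by
  rw [Walk.edgeSet_map, Walk.edgeSet_map, (Set.image_injective.2 (Sym2.map.injective hf)).eq_iff]

def CyclesAreDisjointTriangles (G : SimpleGraph V) : Prop :=
  ∀ ⦃a b : V⦄ (p : G.Walk a a) (q : G.Walk b b), p.IsCycle → q.IsCycle →
    (∃ x ∈ p.support, x ∈ q.support) → p.length = 3 ∧ p.edgeSet = q.edgeSet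

namespace CyclesAreDisjointTriangles

variable {G : SimpleGraph V} {H : SimpleGraph W}

theorem isCactus (hG : G.CyclesAreDisjointTriangles) : IsCactus G := by
  rintro a b p q hp hq ⟨e, hep, heq⟩
  induction e using Sym2.ind with | _ x y => ?_
  have hpq := (hG p q hp hq ⟨x, p.fst_mem_support_of_mem_edges hep,
    q.fst_mem_support_of_mem_edges heq⟩).2
  exact fun e => Set.ext_iff.1 hpq e

theorem of_injective (f : G →g H) (hf : Function.Injective f)
    (hH : H.CyclesAreDisjointTriangles) : G.CyclesAreDisjointTriangles := by
  rintro a b p q hp hq ⟨x, hxp, hxq⟩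
  have := hH _ _ ((Walk.isCycle_map_iff_of_injective hf).2 hp)
    ((Walk.isCycle_map_iff_of_injective hf).2 hq)
    ⟨f x, p.support_map f ▸ List.mem_map_of_mem hxp, q.support_map f ▸ List.mem_map_of_mem hxq⟩
  rwa [Walk.length_map, Walk.edgeSet_map_eq_edgeSet_map_iff hf] at this

theorem of_embedding (f : G ↪g H) (hG : G.CyclesAreDisjointTriangles) {a b : W}
    {p : H.Walk a a} {q : H.Walk b b} (hp : p.IsCycle) (hq : q.IsCycle)
    (hpf : ∀ x ∈ p.support, x ∈ Set.range f) (hqf : ∀ x ∈ q.support, x ∈ Set.range f)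
    (hpq : ∃ x ∈ p.support, x ∈ q.support) : p.length = 3 ∧ p.edgeSet = q.edgeSet := by
  have hI : (H.induce (Set.range f)).CyclesAreDisjointTriangles :=
    hG.of_injective f.isoInduceRange.symm.toHom f.isoInduceRange.symm.injective
  have hι : Function.Injective (Embedding.induce (G := H) (Set.range f)).toHom :=
    (Embedding.induce (G := H) _).injective
  rw [← Walk.map_induce p hpf] at hp
  rw [← Walk.map_induce q hqf] at hq
  rw [← Walk.map_induce p hpf, ← Walk.map_induce q hqf]
  obtain ⟨x, hxp, hxq⟩ := hpq
  refine (and_congr (iff_of_eq (congrArg (· = 3) (Walk.length_map _ _)))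
    (Walk.edgeSet_map_eq_edgeSet_map_iff hι _ _)).2
    (hI _ _ ((Walk.isCycle_map_iff_of_injective hι).1 hp)
      ((Walk.isCycle_map_iff_of_injective hι).1 hq) ⟨⟨x, hpf x hxp⟩, ?_, ?_⟩) <;>
  simpa [Walk.support_induce]

theorem of_isAcyclic (hG : G.IsAcyclic) : G.CyclesAreDisjointTriangles :=
  fun _ _ p _ hp => absurd hp (hG p)

theorem of_forall_mem_edges (T : Finset (Sym2 V)) (hT : T.card ≤ 3)
    (h : ∀ ⦃a : V⦄ (p : G.Walk a a), p.IsCycle → ∀ e ∈ p.edges, e ∈ T) :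
    G.CyclesAreDisjointTriangles := by
  classical
  have key : ∀ ⦃a : V⦄ (p : G.Walk a a), p.IsCycle → p.length = 3 ∧ p.edges.toFinset = T := by
    intro a p hp
    have hsub : p.edges.toFinset ⊆ T := fun e he => h p hp e (List.mem_toFinset.1 he)
    have hcard : p.edges.toFinset.card = p.length := by
      rw [List.toFinset_card_of_nodup hp.edges_nodup, Walk.length_edges]
    have := hp.three_le_length
    have := Finset.card_le_card hsub
    exact ⟨by omega, Finset.eq_of_subset_of_card_le hsub (by omega)⟩
  rintro a b p q hp hq -
  refine ⟨(key p hp).1, Set.ext fun e => ?_⟩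
  rw [Walk.mem_edgeSet, Walk.mem_edgeSet, ← List.mem_toFinset, ← List.mem_toFinset,
    (key p hp).2, (key q hq).2]

theorem sup_edge {a b : V} (hG : G.CyclesAreDisjointTriangles) (hab : ¬ G.Reachable a b) :
    (G ⊔ edge a b).CyclesAreDisjointTriangles := by
  have hedges : ∀ ⦃z⦄ (r : (G ⊔ edge a b).Walk z z), r.IsCycle → ∀ e ∈ r.edges,
      e ∈ G.edgeSet := by
    intro z r hr e he
    have hbridge : s(a, b) ∉ r.edges :=
      (isBridge_sup_edge.2 (IsBridge.of_not_reachable hab)).notMem_edges_of_isCycle hr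
    have := r.edges_subset_edgeSet he
    rw [edgeSet_sup] at this
    exact this.resolve_right fun h' => hbridge (edgeSet_edge_subset h' ▸ he)
  intro x y p q hp hq hpq
  simpa [Walk.length_transfer, Walk.edgeSet_transfer] using
    hG (p.transfer G (hedges p hp)) (q.transfer G (hedges q hq)) (hp.transfer _) (hq.transfer _)
      (by simpa [Walk.support_transfer] using hpq)

theorem sum {K : SimpleGraph W} (hG : G.CyclesAreDisjointTriangles)
    (hK : K.CyclesAreDisjointTriangles) : (G ⊕g K).CyclesAreDisjointTriangles := by
  classical
  rintro a b p q hp hq ⟨x, hxp, hxq⟩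
  have reach : ∀ {c} (r : (G ⊕g K).Walk c c), x ∈ r.support → ∀ y ∈ r.support,
      (G ⊕g K).Reachable x y :=
    fun r hx y hy => (r.takeUntil x hx).reachable.symm.trans (r.takeUntil y hy).reachable
  rcases x with v | w
  · have side : ∀ {c} (r : (G ⊕g K).Walk c c), .inl v ∈ r.support →
        ∀ y ∈ r.support, y ∈ Set.range (Sum.inl : V → V ⊕ W) := by
      rintro c r hr (v' | w') hy
      · exact ⟨v', rfl⟩
      · exact absurd (reach r hr _ hy) (not_reachable_sum_inl_inr _ _)
    exact of_embedding Embedding.sumInl hG hp hq (side p hxp) (side q hxq) ⟨_, hxp, hxq⟩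
  · have side : ∀ {c} (r : (G ⊕g K).Walk c c), .inr w ∈ r.support →
        ∀ y ∈ r.support, y ∈ Set.range (Sum.inr : W → V ⊕ W) := by
      rintro c r hr (v' | w') hy
      · exact absurd (reach r hr _ hy).symm (not_reachable_sum_inl_inr _ _)
      · exact ⟨w', rfl⟩
    exact of_embedding Embedding.sumInr hK hp hq (side p hxp) (side q hxq) ⟨_, hxp, hxq⟩

end CyclesAreDisjointTriangles

theorem neighborSet_sup_edge_of_ne (G : SimpleGraph V) {a b v : V} (ha : v ≠ a) (hb : v ≠ b) :
    (G ⊔ edge a b).neighborSet v = G.neighborSet v := by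
  ext y
  simp [edge_adj, ha, hb]

theorem ncard_neighborSet_sup_edge_le (G : SimpleGraph V) (a b v : V) :
    ((G ⊔ edge a b).neighborSet v).ncard ≤ (G.neighborSet v).ncard + 1 := by
  classical
  rw [neighborSet_sup]
  refine (Set.ncard_union_le _ _).trans (add_le_add_right ?_ _)
  have hsub : (edge a b).neighborSet v ⊆ {if v = a then b else a} := by
    intro y hy
    simp only [mem_neighborSet, edge_adj] at hy
    grind
  exact (Set.ncard_le_ncard hsub).trans (Set.ncard_singleton _).le

theorem ncard_neighborSet_sum_sup_edge_le {G : SimpleGraph V} {K : SimpleGraph W} {u : V}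
    {w : W} {k : ℕ} (hG : ∀ v, (G.neighborSet v).ncard ≤ k)
    (hK : ∀ x, (K.neighborSet x).ncard ≤ k) (hu : (G.neighborSet u).ncard < k)
    (hw : (K.neighborSet w).ncard < k) (x : V ⊕ W) :
    (((G ⊕g K) ⊔ edge (.inl u) (.inr w)).neighborSet x).ncard ≤ k := by
  rcases x with v | x
  · by_cases hv : v = u
    · subst hv
      refine (ncard_neighborSet_sup_edge_le _ _ _ _).trans ?_
      rw [neighborSet_sum_inl, Set.ncard_image_of_injective _ Sum.inl_injective]
      omega
    · rw [neighborSet_sup_edge_of_ne _ (by simpa) (by simp), neighborSet_sum_inl,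
        Set.ncard_image_of_injective _ Sum.inl_injective]
      exact hG v
  · by_cases hx : x = w
    · subst hx
      refine (ncard_neighborSet_sup_edge_le _ _ _ _).trans ?_
      rw [neighborSet_sum_inr, Set.ncard_image_of_injective _ Sum.inr_injective]
      omega
    · rw [neighborSet_sup_edge_of_ne _ (by simp) (by simpa), neighborSet_sum_inr,
        Set.ncard_image_of_injective _ Sum.inr_injective]
      exact hK x

structure IsSubcubicTriangleCactus (G : SimpleGraph V) : Prop where
  connected : G.Connected
  ncard_neighborSet_le : ∀ v, (G.neighborSet v).ncard ≤ 3
  cyclesAreDisjointTriangles : G.CyclesAreDisjointTriangles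

namespace IsSubcubicTriangleCactus

variable {G : SimpleGraph V}

theorem of_iso {H : SimpleGraph W} (hG : G.IsSubcubicTriangleCactus) (e : G ≃g H) :
    H.IsSubcubicTriangleCactus where
  connected := e.connected_iff.1 hG.connected
  ncard_neighborSet_le w := by
    rw [← e.apply_symm_apply w, ← e.image_neighborSet,
      Set.ncard_image_of_injective _ e.injective]
    exact hG.ncard_neighborSet_le _
  cyclesAreDisjointTriangles :=
    hG.cyclesAreDisjointTriangles.of_injective e.symm.toHom e.symm.injective

theorem sum_sup_edge {K : SimpleGraph W} (hG : G.IsSubcubicTriangleCactus)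
    (hK : K.IsSubcubicTriangleCactus) {u : V} {w : W} (hu : (G.neighborSet u).ncard < 3)
    (hw : (K.neighborSet w).ncard < 3) :
    ((G ⊕g K) ⊔ edge (.inl u) (.inr w)).IsSubcubicTriangleCactus where
  connected := hG.connected.sum_sup_edge hK.connected
  ncard_neighborSet_le :=
    ncard_neighborSet_sum_sup_edge_le hG.ncard_neighborSet_le hK.ncard_neighborSet_le hu hw
  cyclesAreDisjointTriangles :=
    (hG.cyclesAreDisjointTriangles.sum hK.cyclesAreDisjointTriangles).sup_edge
      (not_reachable_sum_inl_inr _ _)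

end IsSubcubicTriangleCactus

theorem isSubcubicTriangleCactus_top_fin_three :
    (⊤ : SimpleGraph (Fin 3)).IsSubcubicTriangleCactus where
  connected := connected_top
  ncard_neighborSet_le v := (Set.ncard_le_ncard (Set.subset_univ _)).trans (by simp)
  cyclesAreDisjointTriangles := .of_forall_mem_edges (⊤ : SimpleGraph (Fin 3)).edgeFinset
    (by decide) fun _ p _ _ he => mem_edgeFinset.2 (p.edges_subset_edgeSet he)

theorem isAcyclic_pathGraph (n : ℕ) : (pathGraph n).IsAcyclic := by
  have key : ∀ i j : Fin n, (i : ℕ) + 1 = j → (pathGraph n).IsBridge s(i, j) := by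
    intro i j hij
    refine isBridge_of_only_edge_leaving {k | k ≤ i} (Set.mem_ofPred.2 le_rfl)
      (by simp only [Set.mem_ofPred_eq, not_le, Fin.lt_def]; omega) fun x y hxy hx hy => ?_
    simp only [pathGraph_adj, Set.mem_ofPred_eq, Fin.le_def, not_le] at hxy hx hy
    rw [show x = i from Fin.ext (by omega), show y = j from Fin.ext (by omega)]
  rw [isAcyclic_iff_forall_isBridge]
  intro e he
  induction e using Sym2.ind with | _ i j => ?_
  rcases pathGraph_adj.1 he with h | h
  · exact key i j h
  · rw [Sym2.eq_swap]
    exact key j i h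

theorem ncard_neighborSet_pathGraph_le {n : ℕ} (i : Fin n) :
    ((pathGraph n).neighborSet i).ncard ≤
      (if (i : ℕ) = 0 then 0 else 1) + if (i : ℕ) + 1 = n then 0 else 1 := by
  have h : (pathGraph n).neighborSet i =
      {j : Fin n | (j : ℕ) + 1 = i} ∪ {j : Fin n | (i : ℕ) + 1 = j} := by
    ext j
    simp [pathGraph_adj, or_comm]
  rw [h]
  refine (Set.ncard_union_le _ _).trans (add_le_add ?_ ?_) <;> split_ifs
  all_goals first
    | rw [Set.ncard_le_one_iff]; grind
    | rw [Set.eq_empty_of_forall_notMem fun j (hj : j ∈ {j : Fin n | _}) => by grind]; simp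

theorem isSubcubicTriangleCactus_pathGraph (n : ℕ) :
    (pathGraph (n + 1)).IsSubcubicTriangleCactus where
  connected := pathGraph_connected n
  ncard_neighborSet_le i := (ncard_neighborSet_pathGraph_le i).trans (by split_ifs <;> omega)
  cyclesAreDisjointTriangles := .of_isAcyclic (isAcyclic_pathGraph _)

def tadpole (n : ℕ) : SimpleGraph (Fin (n + 1) ⊕ Fin 2) :=
  (pathGraph (n + 1) ⊕g ⊤) ⊔ edge (.inl (Fin.last n)) (.inr 0) ⊔ edge (.inl (Fin.last n)) (.inr 1)

section Tadpole

variable {n : ℕ}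

@[simp] theorem tadpole_adj_inl_inl {i j : Fin (n + 1)} :
    (tadpole n).Adj (.inl i) (.inl j) ↔ (pathGraph (n + 1)).Adj i j := by
  simp [tadpole, edge_adj]

@[simp] theorem tadpole_adj_inl_inr {i : Fin (n + 1)} {t : Fin 2} :
    (tadpole n).Adj (.inl i) (.inr t) ↔ i = Fin.last n := by
  fin_cases t <;> simp [tadpole, edge_adj]

@[simp] theorem tadpole_adj_inr_inr {s t : Fin 2} :
    (tadpole n).Adj (.inr s) (.inr t) ↔ s ≠ t := by
  simp [tadpole, edge_adj]

theorem isBridge_tadpole_inl_inl {i j : Fin (n + 1)} (hij : (i : ℕ) + 1 = j) :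
    (tadpole n).IsBridge s(.inl i, .inl j) := by
  refine isBridge_of_only_edge_leaving {x | Sum.elim (· ≤ i) (fun _ => False) x}
    (Set.mem_ofPred.2 le_rfl)
    (by simp only [Set.mem_ofPred_eq, Sum.elim_inl, not_le, Fin.lt_def]; omega) ?_
  rintro (k | s) (l | t) hadj hk hl <;>
    simp only [Set.mem_ofPred_eq, Sum.elim_inl, Sum.elim_inr, not_le, Fin.le_def,
      tadpole_adj_inl_inl, tadpole_adj_inl_inr, tadpole_adj_inr_inr, pathGraph_adj]
      at hadj hk hl
  · rw [show k = i from Fin.ext (by omega), show l = j from Fin.ext (by omega)]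
  · have := j.is_lt
    simp [hadj] at hk
    omega

theorem cyclesAreDisjointTriangles_tadpole : (tadpole n).CyclesAreDisjointTriangles := by
  refine .of_forall_mem_edges {s(.inl (Fin.last n), .inr 0), s(.inl (Fin.last n), .inr 1),
    s(.inr 0, .inr 1)} Finset.card_le_three fun a p hp e he => ?_
  induction e using Sym2.ind with | _ x y => ?_
  have hadj := p.adj_of_mem_edges he
  rcases x with i | s <;> rcases y with j | t
  · exfalso
    rcases pathGraph_adj.1 (tadpole_adj_inl_inl.1 hadj) with h | h
    · exact (isBridge_tadpole_inl_inl h).notMem_edges_of_isCycle hp he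
    · exact (isBridge_tadpole_inl_inl h).notMem_edges_of_isCycle hp (Sym2.eq_swap ▸ he)
  · rw [tadpole_adj_inl_inr.1 hadj]
    fin_cases t <;> simp
  · rw [tadpole_adj_inl_inr.1 hadj.symm]
    fin_cases s <;> simp [Sym2.eq_swap]
  · have := tadpole_adj_inr_inr.1 hadj
    fin_cases s <;> fin_cases t <;> simp_all [Sym2.eq_swap]

theorem ncard_neighborSet_tadpole_le_add_two (x : Fin (n + 1) ⊕ Fin 2) :
    ((tadpole n).neighborSet x).ncard ≤
      ((pathGraph (n + 1) ⊕g (⊤ : SimpleGraph (Fin 2))).neighborSet x).ncard + 2 :=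
  calc ((tadpole n).neighborSet x).ncard
    _ ≤ (((pathGraph (n + 1) ⊕g ⊤) ⊔ edge (.inl (Fin.last n)) (.inr 0)).neighborSet x).ncard
          + 1 := ncard_neighborSet_sup_edge_le _ _ _ _
    _ ≤ ((pathGraph (n + 1) ⊕g ⊤).neighborSet x).ncard + 1 + 1 := by
      gcongr
      exact ncard_neighborSet_sup_edge_le _ _ _ _

theorem ncard_neighborSet_tadpole_inl_le (i : Fin (n + 1)) :
    ((tadpole n).neighborSet (.inl i)).ncard ≤ (if (i : ℕ) = 0 then 0 else 1) + 2 := by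
  have hpath := ncard_neighborSet_pathGraph_le i
  have hsum : ((pathGraph (n + 1) ⊕g (⊤ : SimpleGraph (Fin 2))).neighborSet (.inl i)).ncard =
      ((pathGraph (n + 1)).neighborSet i).ncard := by
    rw [neighborSet_sum_inl, Set.ncard_image_of_injective _ Sum.inl_injective]
  by_cases hi : i = Fin.last n
  · have := ncard_neighborSet_tadpole_le_add_two (.inl i)
    have : (i : ℕ) + 1 = n + 1 := by simp [hi]
    split_ifs at hpath ⊢ <;> omega
  · have : (i : ℕ) + 1 ≠ n + 1 := fun h => hi (Fin.ext (by simp; omega))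
    rw [tadpole, neighborSet_sup_edge_of_ne _ (by simpa) (by simp),
      neighborSet_sup_edge_of_ne _ (by simpa) (by simp), hsum]
    split_ifs at hpath ⊢ <;> omega

theorem ncard_neighborSet_tadpole_inr_le (t : Fin 2) :
    ((tadpole n).neighborSet (.inr t)).ncard ≤ 3 := by
  have htop : ((⊤ : SimpleGraph (Fin 2)).neighborSet t).ncard ≤ 1 := by
    rw [Set.ncard_le_one_iff]
    simp only [mem_neighborSet, top_adj]
    omega
  have := ncard_neighborSet_tadpole_le_add_two (n := n) (.inr t)
  rw [neighborSet_sum_inr, Set.ncard_image_of_injective _ Sum.inr_injective] at this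
  omega

theorem isSubcubicTriangleCactus_tadpole (n : ℕ) : (tadpole n).IsSubcubicTriangleCactus where
  connected := ((pathGraph_connected n).sum_sup_edge connected_top).mono le_sup_left
  ncard_neighborSet_le
    | .inl i => (ncard_neighborSet_tadpole_inl_le i).trans (by split_ifs <;> omega)
    | .inr t => ncard_neighborSet_tadpole_inr_le t
  cyclesAreDisjointTriangles := cyclesAreDisjointTriangles_tadpole

end Tadpole

theorem image_sym2Map_inl_edgeSet (G : SimpleGraph V) :
    Sym2.map (Sum.inl : V → V ⊕ W) '' G.edgeSet = (G ⊕g (⊥ : SimpleGraph W)).edgeSet := by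
  ext e
  induction e using Sym2.ind with | _ x y => ?_
  rcases x with a | a <;> rcases y with b | b <;> simp [Sym2.exists]
  grind [G.adj_symm]

theorem attachPath_succ {V : Type} (G : SimpleGraph V) (u : V) (m : ℕ) :
    attachPath G u (m + 1) = (G ⊕g pathGraph (m + 1)) ⊔ edge (.inl u) (.inr 0) := by
  ext (a | i) (b | j) <;>
  simp only [attachPath, fromEdgeSet_adj, image_sym2Map_inl_edgeSet, Set.mem_union,
    Set.mem_ofPred_eq, mem_edgeSet, sup_adj, sum_adj, Sum.inl.injEq, Sum.inr.injEq,
    reduceCtorEq, bot_adj, edge_adj, Sym2.eq_iff, pathGraph_adj] <;>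
  grind [G.ne_of_adj, Fin.ext_iff]

theorem attachTrianglePath_succ {V : Type} (G : SimpleGraph V) (u : V) (m : ℕ) :
    attachTrianglePath G u (m + 1) = (G ⊕g tadpole m) ⊔ edge (.inl u) (.inr (.inl 0)) := by
  ext (a | i | s) (b | j | t) <;>
  simp only [attachTrianglePath, tadpole, fromEdgeSet_adj, image_sym2Map_inl_edgeSet,
    Set.mem_union, Set.mem_ofPred_eq, mem_edgeSet, sup_adj, sum_adj, Sum.inl.injEq, Sum.inr.injEq,
    reduceCtorEq, bot_adj, top_adj, edge_adj, Sym2.eq_iff, pathGraph_adj,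
    Set.mem_singleton_iff] <;>
  grind [G.ne_of_adj, Fin.ext_iff]

namespace IsSubcubicTriangleCactus

variable {V : Type} {G : SimpleGraph V} {u : V} {n : ℕ}

theorem attachPath (hG : G.IsSubcubicTriangleCactus) (hu : (G.neighborSet u).ncard = 2)
    (hn : 0 < n) : (attachPath G u n).IsSubcubicTriangleCactus := by
  obtain ⟨m, rfl⟩ : ∃ m, n = m + 1 := ⟨n - 1, by omega⟩
  rw [attachPath_succ]
  refine hG.sum_sup_edge (isSubcubicTriangleCactus_pathGraph m) (by omega) ?_
  exact (ncard_neighborSet_pathGraph_le 0).trans_lt (by split_ifs <;> simp)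

theorem attachTrianglePath (hG : G.IsSubcubicTriangleCactus) (hu : (G.neighborSet u).ncard = 2)
    (hn : 0 < n) : (attachTrianglePath G u n).IsSubcubicTriangleCactus := by
  obtain ⟨m, rfl⟩ : ∃ m, n = m + 1 := ⟨n - 1, by omega⟩
  rw [attachTrianglePath_succ]
  refine hG.sum_sup_edge (isSubcubicTriangleCactus_tadpole m) (by omega) ?_
  exact (ncard_neighborSet_tadpole_inl_le 0).trans_lt (by simp)

end IsSubcubicTriangleCactus

end SimpleGraph

theorem T_members_are_subcubic_cacti_with_disjoint_triangles
    {V : Type} (G : SimpleGraph V) (h : InT G) :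
    G.Connected ∧ IsCactus G ∧
    (∀ v, (G.neighborSet v).ncard ≤ 3) ∧
    (∀ (w : V) (p : G.Walk w w), p.IsCycle → p.length = 3) ∧
    (∀ (a b : V) (p : G.Walk a a) (q : G.Walk b b), p.IsCycle → q.IsCycle →
      (∃ x, x ∈ p.support ∧ x ∈ q.support) → ∀ e, e ∈ p.edges ↔ e ∈ q.edges) := by
  have hG : G.IsSubcubicTriangleCactus := by
    induction h with
    | triangle => exact isSubcubicTriangleCactus_top_fin_three
    | iso _ e ih => exact ih.of_iso e
    | evenPath u n _ hu _ hn _ ih => exact ih.attachPath hu hn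
    | oddTrianglePath u n _ hu _ hn ih => exact ih.attachTrianglePath hu hn.pos
  have hcyc := hG.cyclesAreDisjointTriangles
  refine ⟨hG.connected, hcyc.isCactus, hG.ncard_neighborSet_le, fun w p hp => ?_,
    fun a b p q hp hq hpq => Set.ext_iff.1 (hcyc p q hp hq hpq).2⟩
  exact (hcyc p p hp hp ⟨w, p.start_mem_support, p.start_mem_support⟩).1
end
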